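/- arXiv:2111.11162 — 13 statements merged into one kernel-verified Lean document; each statement's English description precedes it below -/
import Mathlib

section
/- Let G be an n-vertex graph that is B_t-free (contains no book B_t, i.e., t triangles sharing a common edge). Then for any r ≥ 3, the number of copies of K_r in G is at most C(t-2, r-3) · (number of triangles in G) / C(r,3). (In particular, any two adjacent vertices have at most t-1 common neighbors.) -/
/-
Double count pairs (T, K) of a triangle T contained in an r-clique K. Each
r-clique contains C(r,3) triangles. Conversely, an r-clique K ⊇ T is determined by K \ T,
an (r-3)-set of vertices adjacent to every vertex of the triangle T = {a, b, c}; these lie in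
N(a) ∩ N(b) minus c, which has at most t - 2 elements because G has no B_t.
-/

/-- The graph `G` contains a copy of the book `B_t`: vertices `u, v, w_1, ..., w_t`
with edges `uv`, `uw_i`, `vw_i` for all `i`. -/
def ContainsBook {V : Type*} (G : SimpleGraph V) (t : ℕ) : Prop :=
  ∃ (u v : V) (w : Fin t → V),
    Function.Injective w ∧ (∀ i, w i ≠ u) ∧ (∀ i, w i ≠ v) ∧
    G.Adj u v ∧ (∀ i, G.Adj u (w i)) ∧ (∀ i, G.Adj v (w i))

open Finset

namespace SimpleGraph

variable {V : Type*} [Fintype V] {G : SimpleGraph V} [DecidableRel G.Adj]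

variable (G) in
def commonNeighborFinset (T : Finset V) : Finset V := {x | ∀ y ∈ T, G.Adj y x}

@[simp]
theorem mem_commonNeighborFinset {T : Finset V} {x : V} :
    x ∈ G.commonNeighborFinset T ↔ ∀ y ∈ T, G.Adj y x := by
  simp [commonNeighborFinset]

variable [DecidableEq V]

theorem card_inter_neighborFinset_lt_of_not_containsBook {t : ℕ} (hfree : ¬ ContainsBook G t)
    {a b : V} (hab : G.Adj a b) : #(G.neighborFinset a ∩ G.neighborFinset b) < t := by
  by_contra! h
  obtain ⟨w⟩ := Function.Embedding.nonempty_of_card_le (α := Fin t)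
    (β := ↥(G.neighborFinset a ∩ G.neighborFinset b))
    (by simpa only [Fintype.card_coe, Fintype.card_fin] using h)
  have hw i : G.Adj a (w i) ∧ G.Adj b (w i) := by
    simpa only [mem_inter, mem_neighborFinset] using (w i).2
  exact hfree ⟨a, b, fun i ↦ w i, Subtype.val_injective.comp w.injective,
    fun i ↦ (hw i).1.ne', fun i ↦ (hw i).2.ne', hab, fun i ↦ (hw i).1, fun i ↦ (hw i).2⟩

theorem filter_cliqueFinset_subset_eq_powersetCard {K : Finset V} (hK : G.IsClique K) (k : ℕ) :
    {T ∈ G.cliqueFinset k | T ⊆ K} = K.powersetCard k := by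
  ext T
  simp only [mem_filter, mem_cliqueFinset_iff, mem_powersetCard, isNClique_iff]
  exact ⟨fun ⟨⟨_, hT⟩, hTK⟩ ↦ ⟨hTK, hT⟩, fun ⟨hTK, hT⟩ ↦ ⟨⟨hK.subset hTK, hT⟩, hTK⟩⟩

theorem card_filter_cliqueFinset_superset_le (T : Finset V) (r : ℕ) :
    #{K ∈ G.cliqueFinset r | T ⊆ K} ≤ (#(G.commonNeighborFinset T)).choose (r - #T) := by
  rw [← card_powersetCard]
  refine card_le_card_of_injOn (· \ T) (fun K hK ↦ ?_) (fun K₁ hK₁ K₂ hK₂ h ↦ ?_)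
  · simp only [coe_filter, Set.mem_ofPred_eq, mem_cliqueFinset_iff, isNClique_iff] at hK
    obtain ⟨⟨hKclique, hKcard⟩, hTK⟩ := hK
    refine mem_powersetCard.2 ⟨fun x hx ↦ ?_, by rw [card_sdiff_of_subset hTK, hKcard]⟩
    obtain ⟨hxK, hxT⟩ := mem_sdiff.1 hx
    exact mem_commonNeighborFinset.2 fun y hy ↦ hKclique (hTK hy) hxK fun hyx ↦ hxT (hyx ▸ hy)
  · simp only [coe_filter, Set.mem_ofPred_eq] at hK₁ hK₂
    rw [← sdiff_union_of_subset hK₁.2, ← sdiff_union_of_subset hK₂.2]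
    exact congrArg (· ∪ T) h

theorem card_commonNeighborFinset_le_of_not_containsBook {t : ℕ}
    (hfree : ¬ ContainsBook G t) {T : Finset V} (hT : G.IsNClique 3 T) :
    #(G.commonNeighborFinset T) ≤ t - 2 := by
  obtain ⟨a, b, c, hab, hac, hbc, rfl⟩ := card_eq_three.1 hT.card_eq
  have hadj : G.Adj b c ∧ G.Adj a b ∧ G.Adj a c := by
    simpa [hab, hac, hbc] using hT.isClique
  have hc : c ∈ G.neighborFinset a ∩ G.neighborFinset b := by simp [hadj]
  have hsub : G.commonNeighborFinset {a, b, c} ⊆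
      (G.neighborFinset a ∩ G.neighborFinset b).erase c := by
    intro x hx
    simp only [mem_commonNeighborFinset, mem_insert, mem_singleton, forall_eq_or_imp,
      forall_eq] at hx
    simp [hx.1, hx.2.1, hx.2.2.ne']
  have hlt := card_inter_neighborFinset_lt_of_not_containsBook hfree hadj.2.1
  have := card_le_card hsub
  rw [card_erase_of_mem hc] at this
  omega

theorem card_cliqueFinset_mul_choose_le_of_not_containsBook {t : ℕ}
    (hfree : ¬ ContainsBook G t) (r : ℕ) :
    #(G.cliqueFinset r) * r.choose 3 ≤ #(G.cliqueFinset 3) * (t - 2).choose (r - 3) := by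
  refine card_mul_le_card_mul (fun K T ↦ T ⊆ K) (fun K hK ↦ ?_) (fun T hT ↦ ?_)
  · have hK := mem_cliqueFinset_iff.1 hK
    rw [bipartiteAbove, filter_cliqueFinset_subset_eq_powersetCard hK.isClique,
      card_powersetCard, hK.card_eq]
  · have hT := mem_cliqueFinset_iff.1 hT
    calc #((G.cliqueFinset r).bipartiteBelow (fun K T ↦ T ⊆ K) T)
        ≤ (#(G.commonNeighborFinset T)).choose (r - 3) := by
          simpa only [bipartiteBelow, hT.card_eq] using card_filter_cliqueFinset_superset_le T r
      _ ≤ (t - 2).choose (r - 3) :=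
          Nat.choose_le_choose _ (card_commonNeighborFinset_le_of_not_containsBook hfree hT)

end SimpleGraph

/-- If `G` is an `n`-vertex `B_t`-free graph and `r ≥ 3`, then the number of copies of
`K_r` in `G` is at most `C(t-2, r-3) · N(K_3, G) / C(r,3)`. -/
theorem cliques_le_of_bookFree {V : Type*} [Fintype V] [DecidableEq V]
    (t r : ℕ) (hr : 3 ≤ r) (G : SimpleGraph V) [DecidableRel G.Adj]
    (hfree : ¬ ContainsBook G t) :
    ((G.cliqueFinset r).card : ℝ) ≤
      ((t - 2).choose (r - 3) * (G.cliqueFinset 3).card : ℝ) / (r.choose 3) := by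
  rw [le_div_iff₀ (by exact_mod_cast Nat.choose_pos hr), mul_comm _ (#(G.cliqueFinset 3) : ℝ)]
  exact_mod_cast G.card_cliqueFinset_mul_choose_le_of_not_containsBook hfree r
end

section
/- For every t ≥ 1 and r ≥ 3, there is a constant C (depending only on t and r) such that every n-vertex F_t-free graph contains at most C·n copies of K_r. -/
/-!
If `G` is `F_t`-free, the link of a vertex `x` contains no `t` pairwise disjoint edges, so the
endpoints of a maximal such family form a vertex cover `B x` of the link with `|B x| ≤ 2t`.

Each vertex of a triangle covers the opposite edge in its link, i.e. has a `B`-successor among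
the other two vertices. Three vertices that each have a successor always carry a path
`p → q → r` through all of them, so a triangle is determined by `p`, `q ∈ B p` and `r ∈ B q`:
there are at most `(2t)² n` triangles.

For `x` in an `r`-clique `S`, the rest of `S` is a clique in the link of `x`, so at most one of
its vertices, `y`, lies outside `B x`. With any third vertex `a`, `S` is the triangle `{x, a, y}`
together with a subset of `B x`, which gives at most `3 · 2^(2t)` cliques per triangle.
-/

/-- The graph `G` contains a copy of the `t`-fan `F_t`: a vertex `u` and distinct
vertices `v_1, w_1, ..., v_t, w_t`, with edges `uv_i`, `uw_i`, `v_iw_i` for each `i`. -/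
def ContainsFan {V : Type*} (G : SimpleGraph V) (t : ℕ) : Prop :=
  ∃ (u : V) (v w : Fin t → V),
    Function.Injective (fun x : Fin t ⊕ Fin t => Sum.elim v w x) ∧
    (∀ i, v i ≠ u) ∧ (∀ i, w i ≠ u) ∧
    (∀ i, G.Adj u (v i)) ∧ (∀ i, G.Adj u (w i)) ∧ (∀ i, G.Adj (v i) (w i))

open Finset Function

namespace SimpleGraph

variable {V : Type*} (G : SimpleGraph V)

def HasMatchingIn (s : Set V) (k : ℕ) : Prop :=
  ∃ v w : Fin k → V, Injective (Sum.elim v w) ∧ ∀ i, v i ∈ s ∧ w i ∈ s ∧ G.Adj (v i) (w i)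

variable {G}

theorem HasMatchingIn.cons {s : Set V} {k : ℕ} {a b : V} (hab : G.Adj a b) (ha : a ∈ s)
    (hb : b ∈ s) (h : G.HasMatchingIn (s \ {a, b}) k) : G.HasMatchingIn s (k + 1) := by
  obtain ⟨v, w, hinj, hvw⟩ := h
  simp only [Set.mem_sdiff, Set.mem_insert_iff, Set.mem_singleton_iff, not_or] at hvw
  refine ⟨Fin.cons a v, Fin.cons b w, ?_, Fin.forall_fin_succ.mpr ⟨⟨ha, hb, hab⟩, fun i => ?_⟩⟩
  · rw [Sum.elim_injective] at hinj ⊢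
    simp [Fin.cons_injective_iff, Fin.forall_fin_succ, hab.ne, hinj, hvw,
      fun i => Ne.symm (hvw i).2.1.2.1]
  · simpa using ⟨(hvw i).1.1, (hvw i).2.1.1, (hvw i).2.2⟩

theorem HasMatchingIn.containsFan {u : V} {t : ℕ} (h : G.HasMatchingIn (G.neighborSet u) t) :
    ContainsFan G t := by
  obtain ⟨v, w, hinj, hvw⟩ := h
  exact ⟨u, v, w, hinj, fun i => (hvw i).1.ne', fun i => (hvw i).2.1.ne', fun i => (hvw i).1,
    fun i => (hvw i).2.1, fun i => (hvw i).2.2⟩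

theorem HasMatchingIn.zero (s : Set V) : G.HasMatchingIn s 0 :=
  ⟨finZeroElim, finZeroElim, by simp [Injective], finZeroElim⟩

variable [DecidableEq V]

theorem exists_cover_of_not_hasMatchingIn {s : Set V} {k : ℕ} (h : ¬G.HasMatchingIn s k) :
    ∃ B : Finset V, #B ≤ 2 * k ∧ ∀ ⦃a b⦄, a ∈ s → b ∈ s → G.Adj a b → a ∈ B ∨ b ∈ B := by
  induction k generalizing s with
  | zero => exact absurd (.zero s) h
  | succ k ih =>
    by_cases hedge : ∃ a ∈ s, ∃ b ∈ s, G.Adj a b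
    · obtain ⟨a, ha, b, hb, hab⟩ := hedge
      obtain ⟨B, hB, hcov⟩ := ih fun hM => h (hM.cons hab ha hb)
      refine ⟨insert a (insert b B), ?_, fun c d hc hd hcd => ?_⟩
      · grind [card_insert_le]
      · have := @hcov c d
        simp only [Set.mem_sdiff, Set.mem_insert_iff, Set.mem_singleton_iff] at this
        simp only [mem_insert]
        grind
    · exact ⟨∅, by simp, fun a b ha hb hab => (hedge ⟨a, ha, b, hb, hab⟩).elim⟩

variable (G) in
def IsLinkCover (B : V → Finset V) : Prop :=
  ∀ ⦃x a b⦄, G.Adj x a → G.Adj x b → G.Adj a b → a ∈ B x ∨ b ∈ B x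

theorem exists_isLinkCover_of_not_containsFan {t : ℕ} (h : ¬ContainsFan G t) :
    ∃ B : V → Finset V, G.IsLinkCover B ∧ ∀ x, #(B x) ≤ 2 * t := by
  choose B hcard hcov using fun x =>
    exists_cover_of_not_hasMatchingIn (s := G.neighborSet x) fun hM => h hM.containsFan
  exact ⟨B, fun x _ _ hxa hxb hab => hcov x hxa hxb hab, hcard⟩

namespace IsLinkCover

variable {B : V → Finset V} (hB : G.IsLinkCover B)
include hB

theorem exists_path_of_mem {x y z : V} (hxy : G.Adj x y) (hxz : G.Adj x z) (hyz : G.Adj y z)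
    (hy : y ∈ B x) : ∃ p, ∃ q ∈ B p, ∃ r ∈ B q, ({x, y, z} : Finset V) = {p, q, r} := by
  rcases hB hxy.symm hyz hxz with hx | hz
  · rcases hB hxz.symm hyz.symm hxy with hx' | hy'
    · exact ⟨z, x, hx', y, hy, by ext; simp; tauto⟩
    · exact ⟨z, y, hy', x, hx, by ext; simp; tauto⟩
  · exact ⟨x, y, hy, z, hz, rfl⟩

theorem exists_path {T : Finset V} (hT : G.IsNClique 3 T) :
    ∃ p, ∃ q ∈ B p, ∃ r ∈ B q, T = {p, q, r} := by
  obtain ⟨x, y, z, hxy, hxz, hyz, rfl⟩ := is3Clique_iff.mp hT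
  rcases hB hxy hxz hyz with hy | hz
  · exact hB.exists_path_of_mem hxy hxz hyz hy
  · rw [pair_comm]
    exact hB.exists_path_of_mem hxz hxy hyz.symm hz

theorem card_cliqueFinset_three_le [Fintype V] [DecidableRel G.Adj] {k : ℕ}
    (hk : ∀ x, #(B x) ≤ k) : #(G.cliqueFinset 3) ≤ k ^ 2 * Fintype.card V := by
  have hsub : G.cliqueFinset 3 ⊆
      univ.biUnion fun p => (B p).biUnion fun q => (B q).image fun r => {p, q, r} := by
    intro T hT
    obtain ⟨p, q, hq, r, hr, rfl⟩ := hB.exists_path (mem_cliqueFinset_iff.mp hT)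
    simp only [mem_biUnion, mem_image]
    exact ⟨p, mem_univ _, q, hq, r, hr, rfl⟩
  calc #(G.cliqueFinset 3) ≤ #(univ : Finset V) * (k * k) :=
        (card_le_card hsub).trans <| card_biUnion_le_card_mul _ _ _ fun p _ =>
          (card_biUnion_le_card_mul _ _ _ fun q _ => card_image_le.trans (hk q)).trans
            (Nat.mul_le_mul_right _ (hk p))
    _ = k ^ 2 * Fintype.card V := by rw [card_univ]; ring

theorem exists_erase_subset_insert {S : Finset V} (hS : G.IsClique S) {x : V} (hx : x ∈ S)
    (hne : (S.erase x).Nonempty) : ∃ y ∈ S.erase x, S.erase x ⊆ insert y (B x) := by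
  by_cases hout : ∃ y ∈ S.erase x, y ∉ B x
  · obtain ⟨y, hy, hyB⟩ := hout
    obtain ⟨hyx, hyS⟩ := mem_erase.mp hy
    refine ⟨y, hy, fun c hc => ?_⟩
    obtain ⟨hcx, hcS⟩ := mem_erase.mp hc
    rw [mem_insert, or_iff_not_imp_left]
    intro hcy
    exact (hB (hS hx hcS hcx.symm) (hS hx hyS hyx.symm) (hS hcS hyS hcy)).resolve_right hyB
  · obtain ⟨y, hy⟩ := hne
    exact ⟨y, hy, fun c hc => mem_insert_of_mem (not_not.mp fun hcB => hout ⟨c, hc, hcB⟩)⟩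

theorem exists_triangle {r : ℕ} (hr : 3 ≤ r) {S : Finset V} (hS : G.IsNClique r S) :
    ∃ T, G.IsNClique 3 T ∧ ∃ x ∈ T, T ⊆ S ∧ S \ T ⊆ B x := by
  obtain ⟨x, hx⟩ : S.Nonempty := card_pos.mp (by rw [hS.card_eq]; omega)
  have hcard : #(S.erase x) = r - 1 := by rw [card_erase_of_mem hx, hS.card_eq]
  obtain ⟨y, hy, hSxy⟩ := hB.exists_erase_subset_insert hS.isClique hx (card_pos.mp (by omega))
  obtain ⟨a, ha⟩ : ((S.erase x).erase y).Nonempty :=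
    card_pos.mp (by rw [card_erase_of_mem hy]; omega)
  obtain ⟨hay, hax, haS⟩ : a ≠ y ∧ a ≠ x ∧ a ∈ S := by simpa using ha
  obtain ⟨hyx, hyS⟩ := mem_erase.mp hy
  refine ⟨{x, a, y}, is3Clique_triple_iff.mpr ⟨hS.isClique hx haS hax.symm,
    hS.isClique hx hyS hyx.symm, hS.isClique haS hyS hay⟩, x, mem_insert_self _ _,
    by simp [insert_subset_iff, hx, haS, hyS], fun c hc => ?_⟩
  simp only [mem_sdiff, mem_insert, mem_singleton, not_or] at hc
  obtain ⟨hcS, hcx, -, hcy⟩ := hc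
  exact (mem_insert.mp (hSxy (mem_erase.mpr ⟨hcx, hcS⟩))).resolve_left hcy

theorem card_cliqueFinset_le [Fintype V] [DecidableRel G.Adj] {k r : ℕ}
    (hk : ∀ x, #(B x) ≤ k) (hr : 3 ≤ r) :
    #(G.cliqueFinset r) ≤ 3 * 2 ^ k * #(G.cliqueFinset 3) := by
  have hsub : G.cliqueFinset r ⊆ (G.cliqueFinset 3).biUnion fun T =>
      T.biUnion fun x => (B x).powerset.image (T ∪ ·) := by
    intro S hS
    obtain ⟨T, hT, x, hx, hTS, hST⟩ := hB.exists_triangle hr (mem_cliqueFinset_iff.mp hS)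
    simp only [mem_biUnion, mem_image, mem_powerset]
    exact ⟨T, mem_cliqueFinset_iff.mpr hT, x, hx, S \ T, hST, union_sdiff_of_subset hTS⟩
  calc #(G.cliqueFinset r) ≤ #(G.cliqueFinset 3) * (3 * 2 ^ k) :=
        (card_le_card hsub).trans <| card_biUnion_le_card_mul _ _ _ fun T hT => by
          rw [← (mem_cliqueFinset_iff.mp hT).card_eq]
          exact card_biUnion_le_card_mul _ _ _ fun x _ => card_image_le.trans <|
            (card_powerset _).trans_le (Nat.pow_le_pow_right two_pos (hk x))
    _ = 3 * 2 ^ k * #(G.cliqueFinset 3) := mul_comm _ _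

end IsLinkCover

end SimpleGraph

theorem cliques_linear_of_fanFree_general (t r : ℕ) (hr : 3 ≤ r) :
    ∃ C : ℕ, ∀ (V : Type) [Fintype V] [DecidableEq V]
      (G : SimpleGraph V) [DecidableRel G.Adj],
      ¬ ContainsFan G t → (G.cliqueFinset r).card ≤ C * Fintype.card V := by
  refine ⟨3 * 2 ^ (2 * t) * (2 * t) ^ 2, fun V _ _ G _ hG => ?_⟩
  obtain ⟨B, hB, hcard⟩ := SimpleGraph.exists_isLinkCover_of_not_containsFan hG
  calc #(G.cliqueFinset r) ≤ 3 * 2 ^ (2 * t) * #(G.cliqueFinset 3) :=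
        hB.card_cliqueFinset_le hcard hr
    _ ≤ 3 * 2 ^ (2 * t) * ((2 * t) ^ 2 * Fintype.card V) :=
        Nat.mul_le_mul_left _ (hB.card_cliqueFinset_three_le hcard)
    _ = 3 * 2 ^ (2 * t) * (2 * t) ^ 2 * Fintype.card V := by ring

/-- For every `t ≥ 1` and `r ≥ 3` there is a constant `C` (depending only on `t` and
`r`) such that every `n`-vertex `F_t`-free graph contains at most `C·n` copies of
`K_r`. -/
theorem cliques_linear_of_fanFree (t r : ℕ) (ht : 1 ≤ t) (hr : 3 ≤ r) :
    ∃ C : ℕ, ∀ (V : Type) [Fintype V] [DecidableEq V]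
      (G : SimpleGraph V) [DecidableRel G.Adj],
      ¬ ContainsFan G t → (G.cliqueFinset r).card ≤ C * Fintype.card V :=
  cliques_linear_of_fanFree_general t r hr
end

section
/- Construction 1 contains no Berge triangle: let L be a set of m disjoint pairs {a_i, b_i} and R a disjoint vertex set, and let H be the 3-uniform hypergraph with hyperedges {a_i, b_i, x} for all i ≤ m and x ∈ R. Then H contains no Berge triangle, i.e., there do not exist three distinct vertices u, v, w and three distinct hyperedges h_1, h_2, h_3 of H with {u,v} ⊆ h_1, {v,w} ⊆ h_2, {u,w} ⊆ h_3. -/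
/-- The hypergraph `H` contains a Berge triangle: three distinct vertices `u, v, w`
and three pairwise distinct hyperedges `h₁, h₂, h₃ ∈ H` with `{u,v} ⊆ h₁`,
`{v,w} ⊆ h₂` and `{u,w} ⊆ h₃`. -/
def HasBergeTriangle {V : Type*} (H : Finset (Finset V)) : Prop :=
  ∃ (u v w : V) (h₁ h₂ h₃ : Finset V),
    u ≠ v ∧ v ≠ w ∧ u ≠ w ∧
    h₁ ∈ H ∧ h₂ ∈ H ∧ h₃ ∈ H ∧
    h₁ ≠ h₂ ∧ h₂ ≠ h₃ ∧ h₁ ≠ h₃ ∧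
    u ∈ h₁ ∧ v ∈ h₁ ∧ v ∈ h₂ ∧ w ∈ h₂ ∧ u ∈ h₃ ∧ w ∈ h₃

/-- Construction 1 contains no Berge triangle: if `H` is the 3-uniform hypergraph
whose hyperedges are `{a_i, b_i, x}` for the `m` disjoint twin pairs `{a_i, b_i}`
and vertices `x` of a disjoint set `R`, then `H` has no Berge triangle. -/
theorem construction1_bergeTriangleFree {V : Type*} [DecidableEq V] (m : ℕ)
    (a b : Fin m → V) (R : Finset V)
    (ha : Function.Injective a) (hb : Function.Injective b)
    (hab : ∀ i j, a i ≠ b j)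
    (haR : ∀ i, a i ∉ R) (hbR : ∀ i, b i ∉ R)
    (H : Finset (Finset V))
    (hH : H = (Finset.univ ×ˢ R).image (fun p : Fin m × V => {a p.1, b p.1, p.2})) :
    ¬ HasBergeTriangle H := by
  rintro ⟨u, v, w, h₁, h₂, h₃, huv, hvw, huw, m1, m2, m3, h12, h23, h13,
    u1, v1, v2, w2, u3, w3⟩
  subst hH
  simp only [Finset.mem_image, Finset.mem_product, Finset.mem_univ, true_and,
    Prod.exists] at m1 m2 m3
  obtain ⟨i, x, hx, rfl⟩ := m1
  obtain ⟨j, y, hy, rfl⟩ := m2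
  obtain ⟨k, z, hz, rfl⟩ := m3
  have key : ∀ (c : V) (i : Fin m) (x : V), x ∈ R → c ∉ R →
      c ∈ ({a i, b i, x} : Finset V) → c = a i ∨ c = b i := by
    intro c i x hx hc hm
    simp only [Finset.mem_insert, Finset.mem_singleton] at hm
    rcases hm with h | h | h
    · exact Or.inl h
    · exact Or.inr h
    · exact absurd (h ▸ hx) hc
  have keyR : ∀ (c : V) (i : Fin m) (x : V), x ∈ R → c ∈ R →
      c ∈ ({a i, b i, x} : Finset V) → c = x := by
    intro c i x hx hc hm
    simp only [Finset.mem_insert, Finset.mem_singleton] at hm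
    rcases hm with h | h | h
    · exact absurd (h ▸ hc) (haR i)
    · exact absurd (h ▸ hc) (hbR i)
    · exact h
  have pairEq : ∀ (c : V) (i j : Fin m),
      (c = a i ∨ c = b i) → (c = a j ∨ c = b j) → i = j := by
    rintro c i j (rfl | rfl) (h | h)
    · exact ha h
    · exact absurd h (hab i j)
    · exact absurd h.symm (hab j i)
    · exact hb h
  by_cases hu : u ∈ R
  · by_cases hv : v ∈ R
    · exact huv ((keyR u i x hx hu u1).trans (keyR v i x hx hv v1).symm)
    · by_cases hw : w ∈ R
      · exact huw ((keyR u k z hz hu u3).trans (keyR w k z hz hw w3).symm)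
      · have hij : i = j := pairEq v i j (key v i x hx hv v1) (key v j y hy hv v2)
        have hjk : j = k := pairEq w j k (key w j y hy hw w2) (key w k z hz hw w3)
        have hxz : x = z := (keyR u i x hx hu u1).symm.trans (keyR u k z hz hu u3)
        exact h13 (by rw [hij, hjk, hxz])
  · by_cases hv : v ∈ R
    · by_cases hw : w ∈ R
      · exact hvw ((keyR v j y hy hv v2).trans (keyR w j y hy hw w2).symm)
      · have hik : i = k := pairEq u i k (key u i x hx hu u1) (key u k z hz hu u3)
        have hjk : j = k := pairEq w j k (key w j y hy hw w2) (key w k z hz hw w3)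
        have hxy : x = y := (keyR v i x hx hv v1).symm.trans (keyR v j y hy hv v2)
        exact h12 (by rw [hik, hjk, hxy])
    · by_cases hw : w ∈ R
      · have hij : i = j := pairEq v i j (key v i x hx hv v1) (key v j y hy hv v2)
        have hik : i = k := pairEq u i k (key u i x hx hu u1) (key u k z hz hu u3)
        have hyz : y = z := (keyR w j y hy hw w2).symm.trans (keyR w k z hz hw w3)
        exact h23 (by rw [← hij, hik, hyz])
      · have hij : i = j := pairEq v i j (key v i x hx hv v1) (key v j y hy hv v2)
        have hu1 := key u i x hx hu u1
        have hv1 := key v i x hx hv v1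
        have hw2 := key w j y hy hw w2
        rw [← hij] at hw2
        rcases hu1 with rfl | rfl <;> rcases hv1 with h | h <;>
            rcases hw2 with h' | h' <;>
          first
          | exact huv h.symm
          | exact huw h'.symm
          | exact hvw (h.trans h'.symm)
end

section
/- Greedy extension along heavy edges: let F be a graph with p = |E(F)| edges, let H be a hypergraph with shadow graph G (uv is an edge of G iff some hyperedge contains both u and v). Suppose F' is a subgraph of F, there is a Berge copy of F' in H with a fixed injection f' : E(F') → H, and every edge of F not in F' is p-heavy in G (contained in at least p distinct hyperedges of H). Then f' extends to a Berge copy of F in H, i.e., there is an injection f : E(F) → H with e ⊆ f(e) for all e ∈ E(F) and f agreeing with f' on E(F'). -/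
attribute [local instance] Classical.propDecidable

private lemma berge_aux {V : Type*} [Fintype V] [DecidableEq V]
    (H : Finset (Finset V)) (EF : Finset (Sym2 V)) (p : ℕ) (hp : p = EF.card) :
    ∀ n (E' : Finset (Sym2 V)), (EF \ E').card = n → E' ⊆ EF →
    ∀ f' : Sym2 V → Finset V, Set.InjOn f' ↑E' →
    (∀ e ∈ E', f' e ∈ H ∧ ∀ x ∈ e, x ∈ f' e) →
    (∀ e ∈ EF, e ∉ E' → p ≤ (H.filter (fun h => ∀ x ∈ e, x ∈ h)).card) →
    ∃ f : Sym2 V → Finset V,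
      Set.InjOn f ↑EF ∧
      (∀ e ∈ EF, f e ∈ H ∧ ∀ x ∈ e, x ∈ f e) ∧
      (∀ e ∈ E', f e = f' e) := by
  intro n
  induction n with
  | zero =>
    intro E' hcard hsub f' hinj hmem _
    have hEq : E' = EF := Finset.eq_of_subset_of_card_le hsub (by
      have := Finset.card_sdiff_add_card_eq_card hsub
      omega)
    subst hEq
    exact ⟨f', hinj, hmem, fun e _ => rfl⟩
  | succ n ih =>
    intro E' hcard hsub f' hinj hmem hheavy
    have hne : (EF \ E').Nonempty := Finset.card_pos.mp (by omega)
    obtain ⟨e, he⟩ := hne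
    have heEF : e ∈ EF := (Finset.mem_sdiff.mp he).1
    have heE' : e ∉ E' := (Finset.mem_sdiff.mp he).2
    have hcardlt : (E'.image f').card < p := by
      calc (E'.image f').card ≤ E'.card := Finset.card_image_le
        _ < EF.card := Finset.card_lt_card ⟨hsub, fun h => heE' (h heEF)⟩
        _ = p := hp.symm
    have hex : ∃ h ∈ H.filter (fun h => ∀ x ∈ e, x ∈ h), h ∉ E'.image f' := by
      by_contra hcon
      push_neg at hcon
      have := Finset.card_le_card hcon
      have := hheavy e heEF heE'
      omega
    obtain ⟨h, hhF, hhI⟩ := hex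
    have hhH := (Finset.mem_filter.mp hhF).1
    have hhV := (Finset.mem_filter.mp hhF).2
    set f'' : Sym2 V → Finset V := Function.update f' e h with hf''
    have hagree : ∀ a ∈ E', f'' a = f' a := by
      intro a ha
      have hane : a ≠ e := by rintro rfl; exact heE' ha
      exact Function.update_of_ne hane _ _
    have hinj'' : Set.InjOn f'' ↑(insert e E') := by
      intro a ha b hb hab
      simp only [Finset.coe_insert, Set.mem_insert_iff, Finset.mem_coe] at ha hb
      rcases ha with rfl | ha <;> rcases hb with rfl | hb
      · rfl
      · exfalso; apply hhI
        have : h = f' b := by rw [← hagree b hb, ← hab]; simp [hf'']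
        exact Finset.mem_image.mpr ⟨b, hb, this.symm⟩
      · exfalso; apply hhI
        have : h = f' a := by rw [← hagree a ha, hab]; simp [hf'']
        exact Finset.mem_image.mpr ⟨a, ha, this.symm⟩
      · exact hinj ha hb (by rwa [hagree a ha, hagree b hb] at hab)
    have hmem'' : ∀ a ∈ insert e E', f'' a ∈ H ∧ ∀ x ∈ a, x ∈ f'' a := by
      intro a ha
      rcases Finset.mem_insert.mp ha with rfl | ha
      · rw [hf'', Function.update_self]; exact ⟨hhH, hhV⟩
      · rw [hagree a ha]; exact hmem a ha
    have hcard'' : (EF \ insert e E').card = n := by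
      rw [Finset.sdiff_insert]
      rw [Finset.card_erase_of_mem he]
      omega
    obtain ⟨f, hfinj, hfmem, hfagree⟩ := ih (insert e E') hcard''
      (Finset.insert_subset heEF hsub) f'' hinj'' hmem''
      (fun a haEF ha => hheavy a haEF (fun h' => ha (Finset.mem_insert_of_mem h')))
    exact ⟨f, hfinj, hfmem, fun a ha =>
      (hfagree a (Finset.mem_insert_of_mem ha)).trans (hagree a ha)⟩

/-- Greedy extension along heavy edges: let `F` be a graph with `p = |E(F)|` edges and
`H` a hypergraph.  If `F'` is a subgraph of `F` admitting a Berge copy in `H` via an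
injection `f'` on its edges, and every edge of `F` not in `F'` is `p`-heavy (contained
in at least `p` hyperedges of `H`), then `f'` extends to a Berge copy of `F` in `H`. -/
theorem berge_extension_along_heavy_edges {V : Type*} [Fintype V] [DecidableEq V]
    (H : Finset (Finset V)) (F F' : SimpleGraph V)
    (hle : F' ≤ F) (p : ℕ) (hp : p = F.edgeFinset.card)
    (f' : Sym2 V → Finset V)
    (hinj' : Set.InjOn f' F'.edgeFinset)
    (hmem' : ∀ e ∈ F'.edgeFinset, f' e ∈ H ∧ ∀ x ∈ e, x ∈ f' e)
    (hheavy : ∀ e ∈ F.edgeFinset, e ∉ F'.edgeFinset →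
      p ≤ (H.filter (fun h => ∀ x ∈ e, x ∈ h)).card) :
    ∃ f : Sym2 V → Finset V,
      Set.InjOn f F.edgeFinset ∧
      (∀ e ∈ F.edgeFinset, f e ∈ H ∧ ∀ x ∈ e, x ∈ f e) ∧
      (∀ e ∈ F'.edgeFinset, f e = f' e) := by
  exact berge_aux H F.edgeFinset p hp _ F'.edgeFinset rfl
    (by simpa using SimpleGraph.edgeFinset_mono hle) f' hinj' hmem' hheavy
end

section
/- Every triangle in the shadow graph of a 3-uniform hypergraph is the core of a Berge triangle unless the triangle's vertex set is itself a hyperedge containing at least two light edges. Precisely: let H be a 3-uniform hypergraph and u, v, w distinct vertices such that each of uv, vw, uw is contained in some hyperedge. If there do not exist three distinct hyperedges h_1, h_2, h_3 with {u,v} ⊆ h_1, {v,w} ⊆ h_2, {u,w} ⊆ h_3, then {u,v,w} ∈ H and at least two of the three pairs uv, vw, uw are contained in exactly one hyperedge of H. -/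
attribute [local instance] Classical.propDecidable

/-! An edge containing two of the pairs `uv`, `vw`, `uw` contains all of `u, v, w`, so by
3-uniformity it is the edge `T = {u, v, w}`. Hence the sets of edges through the three pairs
meet pairwise at most in `T`. If two of them had an edge other than `T`, these two edges
together with `T` would be distinct representatives, i.e. a Berge triangle; the same argument
applied to arbitrary edges through the three pairs shows that `T` is an edge at all. -/

open Finset

namespace Finset

variable {α : Type*}

def HasDistinctReps (A B C : Finset α) : Prop :=
  ∃ a ∈ A, ∃ b ∈ B, ∃ c ∈ C, a ≠ b ∧ b ≠ c ∧ a ≠ c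

theorem card_eq_one_or_exists_ne {s : Finset α} {t : α} (ht : t ∈ s) :
    #s = 1 ∨ ∃ a ∈ s, a ≠ t := by
  by_cases h : ∃ a ∈ s, a ≠ t
  · exact Or.inr h
  · push Not at h
    exact Or.inl (card_eq_one.mpr ⟨t, eq_singleton_iff_unique_mem.mpr ⟨ht, h⟩⟩)

theorem two_card_eq_one_of_not_hasDistinctReps {A B C : Finset α} {t : α}
    (htA : t ∈ A) (htB : t ∈ B) (htC : t ∈ C)
    (hAB : ∀ x ∈ A, x ∈ B → x = t) (hBC : ∀ x ∈ B, x ∈ C → x = t)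
    (hAC : ∀ x ∈ A, x ∈ C → x = t) (hreps : ¬ HasDistinctReps A B C) :
    (#A = 1 ∧ #B = 1) ∨ (#A = 1 ∧ #C = 1) ∨ (#B = 1 ∧ #C = 1) := by
  have not_AB : (∃ a ∈ A, a ≠ t) → ¬ ∃ b ∈ B, b ≠ t := by
    rintro ⟨a, ha, hat⟩ ⟨b, hb, hbt⟩
    exact hreps ⟨a, ha, b, hb, t, htC, fun hab => hat (hAB a ha (hab ▸ hb)), hbt, hat⟩
  have not_AC : (∃ a ∈ A, a ≠ t) → ¬ ∃ c ∈ C, c ≠ t := by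
    rintro ⟨a, ha, hat⟩ ⟨c, hc, hct⟩
    exact hreps ⟨a, ha, t, htB, c, hc, hat, hct.symm, fun hac => hat (hAC a ha (hac ▸ hc))⟩
  have not_BC : (∃ b ∈ B, b ≠ t) → ¬ ∃ c ∈ C, c ≠ t := by
    rintro ⟨b, hb, hbt⟩ ⟨c, hc, hct⟩
    exact hreps ⟨t, htA, b, hb, c, hc, hbt.symm, fun hbc => hbt (hBC b hb (hbc ▸ hc)), hct.symm⟩
  rcases card_eq_one_or_exists_ne htA with hA | hA
  · rcases card_eq_one_or_exists_ne htB with hB | hB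
    · exact Or.inl ⟨hA, hB⟩
    · exact Or.inr (Or.inl ⟨hA, (card_eq_one_or_exists_ne htC).resolve_right (not_BC hB)⟩)
  · exact Or.inr (Or.inr ⟨(card_eq_one_or_exists_ne htB).resolve_right (not_AB hA),
      (card_eq_one_or_exists_ne htC).resolve_right (not_AC hA)⟩)

theorem eq_of_card_eq_three {e : Finset α} (he : #e = 3) {u v w : α}
    (huv : u ≠ v) (hvw : v ≠ w) (huw : u ≠ w) (hu : u ∈ e) (hv : v ∈ e) (hw : w ∈ e) :
    e = {u, v, w} :=
  (eq_of_subset_of_card_le (by simp [insert_subset_iff, hu, hv, hw])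
    (by rw [he, card_eq_three.mpr ⟨u, v, w, huv, huw, hvw, rfl⟩])).symm

end Finset

/-- Every triangle in the shadow graph of a 3-uniform hypergraph is the core of a
Berge triangle, unless the triangle's vertex set is itself a hyperedge containing at
least two light edges.  Here a pair is light if exactly one hyperedge contains it. -/
theorem triangle_core_or_light {V : Type*} (H : Finset (Finset V))
    (huniform : ∀ h ∈ H, h.card = 3)
    (u v w : V) (huv : u ≠ v) (hvw : v ≠ w) (huw : u ≠ w)
    (h1 : ∃ h ∈ H, u ∈ h ∧ v ∈ h) (h2 : ∃ h ∈ H, v ∈ h ∧ w ∈ h)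
    (h3 : ∃ h ∈ H, u ∈ h ∧ w ∈ h)
    (hnoberge : ¬ ∃ (e₁ e₂ e₃ : Finset V), e₁ ∈ H ∧ e₂ ∈ H ∧ e₃ ∈ H ∧
      e₁ ≠ e₂ ∧ e₂ ≠ e₃ ∧ e₁ ≠ e₃ ∧
      u ∈ e₁ ∧ v ∈ e₁ ∧ v ∈ e₂ ∧ w ∈ e₂ ∧ u ∈ e₃ ∧ w ∈ e₃) :
    ({u, v, w} : Finset V) ∈ H ∧
      (((H.filter (fun h => u ∈ h ∧ v ∈ h)).card = 1 ∧
          (H.filter (fun h => v ∈ h ∧ w ∈ h)).card = 1) ∨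
        ((H.filter (fun h => u ∈ h ∧ v ∈ h)).card = 1 ∧
          (H.filter (fun h => u ∈ h ∧ w ∈ h)).card = 1) ∨
        ((H.filter (fun h => v ∈ h ∧ w ∈ h)).card = 1 ∧
          (H.filter (fun h => u ∈ h ∧ w ∈ h)).card = 1)) := by
  set T : Finset V := {u, v, w}
  have hcore : ∀ e ∈ H, u ∈ e → v ∈ e → w ∈ e → e = T := fun e he =>
    eq_of_card_eq_three (huniform e he) huv hvw huw
  have hreps : ¬ HasDistinctReps (H.filter fun h => u ∈ h ∧ v ∈ h)
      (H.filter fun h => v ∈ h ∧ w ∈ h) (H.filter fun h => u ∈ h ∧ w ∈ h) := by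
    rintro ⟨a, ha, b, hb, c, hc, hab, hbc, hac⟩
    simp only [mem_filter] at ha hb hc
    exact hnoberge ⟨a, b, c, ha.1, hb.1, hc.1, hab, hbc, hac, ha.2.1, ha.2.2, hb.2.1, hb.2.2,
      hc.2.1, hc.2.2⟩
  have hTH : T ∈ H := by
    obtain ⟨a, ha, hau, hav⟩ := h1
    obtain ⟨b, hb, hbv, hbw⟩ := h2
    obtain ⟨c, hc, hcu, hcw⟩ := h3
    by_contra hT
    refine hnoberge ⟨a, b, c, ha, hb, hc, ?_, ?_, ?_, hau, hav, hbv, hbw, hcu, hcw⟩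
    · rintro rfl; exact hT (hcore a ha hau hav hbw ▸ ha)
    · rintro rfl; exact hT (hcore b hb hcu hbv hbw ▸ hb)
    · rintro rfl; exact hT (hcore a ha hau hav hcw ▸ ha)
  refine ⟨hTH, two_card_eq_one_of_not_hasDistinctReps (t := T) ?_ ?_ ?_ ?_ ?_ ?_ hreps⟩ <;>
    simp only [mem_filter] <;> grind
end

section
/- If an r-uniform hypergraph H is Berge-B_t-free, then its shadow graph G contains no complete tripartite subgraph K_{1, r-1, 5r²t}. -/
/-- The hypergraph `H` contains a Berge copy of the book `B_t`. -/
def HasBergeBook {V : Type*} (H : Finset (Finset V)) (t : ℕ) : Prop :=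
  ∃ (u v : V) (w : Fin t → V) (f₀ : Finset V) (fu fv : Fin t → Finset V),
    u ≠ v ∧ Function.Injective w ∧ (∀ i, w i ≠ u) ∧ (∀ i, w i ≠ v) ∧
    f₀ ∈ H ∧ (∀ i, fu i ∈ H) ∧ (∀ i, fv i ∈ H) ∧
    u ∈ f₀ ∧ v ∈ f₀ ∧
    (∀ i, u ∈ fu i ∧ w i ∈ fu i) ∧ (∀ i, v ∈ fv i ∧ w i ∈ fv i) ∧
    Function.Injective fu ∧ Function.Injective fv ∧
    (∀ i, fu i ≠ f₀) ∧ (∀ i, fv i ≠ f₀) ∧ (∀ i j, fu i ≠ fv j)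

/-- Two vertices are adjacent in the shadow graph of `H` iff they are distinct and
some hyperedge contains both. -/
def ShadowAdj {V : Type*} (H : Finset (Finset V)) (x y : V) : Prop :=
  x ≠ y ∧ ∃ h ∈ H, x ∈ h ∧ y ∈ h

/-- If an `r`-uniform hypergraph `H` is Berge-`B_t`-free, then its shadow graph
contains no complete tripartite subgraph `K_{1, r-1, 5r²t}`. -/
theorem no_tripartite_of_bergeBookFree {V : Type*} (r t : ℕ) (hr : 3 ≤ r) (ht : 1 ≤ t)
    (H : Finset (Finset V)) (huniform : ∀ h ∈ H, h.card = r)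
    (hfree : ¬ HasBergeBook H t) :
    ¬ ∃ (u : V) (v : Fin (r - 1) → V) (w : Fin (5 * r ^ 2 * t) → V),
      Function.Injective v ∧ Function.Injective w ∧
      (∀ i, v i ≠ u) ∧ (∀ j, w j ≠ u) ∧ (∀ i j, v i ≠ w j) ∧
      (∀ i, ShadowAdj H u (v i)) ∧ (∀ j, ShadowAdj H u (w j)) ∧
      (∀ i j, ShadowAdj H (v i) (w j)) := by
  classical
  rintro ⟨u, v, w, hvinj, hwinj, hvu, hwu, hvw, hadjuv, hadjuw, hadjvw⟩
  apply hfree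
  -- choose hyperedges containing u and w j
  choose a haH hau haw using fun j => (hadjuw j).2
  -- for each j, some v i is not in a j
  have hexi : ∀ j, ∃ i, v i ∉ a j := by
    intro j
    by_contra hcon
    push_neg at hcon
    have hsub : Finset.univ.image v ⊆ ((a j).erase u).erase (w j) := by
      intro x hx
      obtain ⟨i, -, rfl⟩ := Finset.mem_image.mp hx
      exact Finset.mem_erase.mpr ⟨hvw i j, Finset.mem_erase.mpr ⟨hvu i, hcon i⟩⟩
    have h1 : (Finset.univ.image v).card = r - 1 := by
      rw [Finset.card_image_of_injective _ hvinj, Finset.card_univ, Fintype.card_fin]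
    have h2 : (((a j).erase u).erase (w j)).card = r - 2 := by
      rw [Finset.card_erase_of_mem (Finset.mem_erase.mpr ⟨hwu j, haw j⟩),
        Finset.card_erase_of_mem (hau j), huniform _ (haH j)]
      omega
    have := Finset.card_le_card hsub
    omega
  choose I hI using hexi
  -- pigeonhole : fix i0 with a large fiber S
  obtain ⟨i0, -, hScard⟩ := Finset.exists_le_card_fiber_of_mul_le_card_of_maps_to
    (s := (Finset.univ : Finset (Fin (5 * r ^ 2 * t)))) (t := Finset.univ) (f := I)
    (n := 5 * r * t) (fun x _ => Finset.mem_univ _)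
    ⟨⟨0, by omega⟩, Finset.mem_univ _⟩
    (by
      rw [Finset.card_univ, Finset.card_univ, Fintype.card_fin, Fintype.card_fin]
      calc (r - 1) * (5 * r * t) ≤ r * (5 * r * t) :=
            Nat.mul_le_mul_right _ (Nat.sub_le r 1)
        _ = 5 * r ^ 2 * t := by ring)
  set S : Finset (Fin (5 * r ^ 2 * t)) := {x ∈ Finset.univ | I x = i0} with hSdef
  have hSa : ∀ j ∈ S, v i0 ∉ a j := by
    intro j hj
    have := (Finset.mem_filter.mp hj).2
    exact this ▸ hI j
  obtain ⟨-, f₀, hf₀H, huf₀, hvf₀⟩ := hadjuv i0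
  -- choose hyperedges containing v i0 and w j
  choose b hbH hvb hwb using fun j => (hadjvw i0 j).2
  -- the key greedy construction
  have key : ∀ k, k ≤ t → ∃ T : Finset (Fin (5 * r ^ 2 * t)), T ⊆ S ∧ T.card = k ∧
      ∃ e f : Fin (5 * r ^ 2 * t) → Finset V,
      (∀ j ∈ T, e j ∈ H ∧ u ∈ e j ∧ w j ∈ e j ∧ f j ∈ H ∧ v i0 ∈ f j ∧ w j ∈ f j ∧
        e j ≠ f₀ ∧ f j ≠ f₀) ∧
      Set.InjOn e T ∧ Set.InjOn f T ∧ (∀ j ∈ T, ∀ l ∈ T, e j ≠ f l) := by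
    intro k
    induction k with
    | zero =>
      exact fun _ => ⟨∅, Finset.empty_subset _, Finset.card_empty, fun _ => f₀, fun _ => f₀,
        by simp, by simp [Set.InjOn], by simp [Set.InjOn], by simp⟩
    | succ k ih =>
      intro hk
      obtain ⟨T, hTS, hTcard, e, f, hmem, hein, hfin, hef⟩ := ih (by omega)
      set U : Finset (Finset V) := (T.image e ∪ T.image f) ∪ {f₀} with hUdef
      have hUH : ∀ g ∈ U, g ∈ H := by
        intro g hg
        rcases Finset.mem_union.mp hg with hg | hg
        · rcases Finset.mem_union.mp hg with hg | hg
          · obtain ⟨j, hj, rfl⟩ := Finset.mem_image.mp hg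
            exact (hmem j hj).1
          · obtain ⟨j, hj, rfl⟩ := Finset.mem_image.mp hg
            exact (hmem j hj).2.2.2.1
        · rw [Finset.mem_singleton.mp hg]; exact hf₀H
      have hUcard : U.card ≤ 2 * k + 1 := by
        calc U.card ≤ (T.image e ∪ T.image f).card + ({f₀} : Finset (Finset V)).card :=
              Finset.card_union_le _ _
          _ ≤ (T.image e).card + (T.image f).card + 1 := by
              simp [Finset.card_union_le]
          _ ≤ k + k + 1 := by
              have h1 := Finset.card_image_le (s := T) (f := e)
              have h2 := Finset.card_image_le (s := T) (f := f)
              omega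
          _ = 2 * k + 1 := by ring
      -- counting bad indices
      have hcount : ∀ c : Fin (5 * r ^ 2 * t) → Finset V, (∀ j, w j ∈ c j) →
          ({j ∈ S | c j ∈ U}).card ≤ U.card * r := by
        intro c hc
        have hsub : {j ∈ S | c j ∈ U} ⊆ U.biUnion (fun g => {j ∈ S | c j = g}) := by
          intro j hj
          obtain ⟨hjS, hjU⟩ := Finset.mem_filter.mp hj
          exact Finset.mem_biUnion.mpr ⟨c j, hjU, Finset.mem_filter.mpr ⟨hjS, rfl⟩⟩
        calc ({j ∈ S | c j ∈ U}).card ≤ (U.biUnion (fun g => {j ∈ S | c j = g})).card :=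
              Finset.card_le_card hsub
          _ ≤ ∑ g ∈ U, ({j ∈ S | c j = g}).card := Finset.card_biUnion_le
          _ ≤ ∑ g ∈ U, r := by
              refine Finset.sum_le_sum fun g hg => ?_
              have hle : ({j ∈ S | c j = g}).card ≤ g.card := by
                refine Finset.card_le_card_of_injOn w (fun j hj => ?_) ?_
                · have := (Finset.mem_filter.mp hj).2
                  exact this ▸ hc j
                · exact fun x _ y _ hxy => hwinj hxy
              rwa [huniform g (hUH g hg)] at hle
          _ = U.card * r := by rw [Finset.sum_const, smul_eq_mul]
      -- find a fresh index
      have hfresh : ∃ j₀ ∈ S, j₀ ∉ T ∧ a j₀ ∉ U ∧ b j₀ ∉ U := by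
        by_contra hcon
        push_neg at hcon
        have hsub : S ⊆ T ∪ {j ∈ S | a j ∈ U} ∪ {j ∈ S | b j ∈ U} := by
          intro j hj
          by_cases hjT : j ∈ T
          · exact Finset.mem_union.mpr (Or.inl (Finset.mem_union.mpr (Or.inl hjT)))
          · rcases em (a j ∈ U) with h | h
            · exact Finset.mem_union.mpr (Or.inl (Finset.mem_union.mpr
                (Or.inr (Finset.mem_filter.mpr ⟨hj, h⟩))))
            · exact Finset.mem_union.mpr (Or.inr
                (Finset.mem_filter.mpr ⟨hj, hcon j hj hjT h⟩))
        have hca := hcount a haw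
        have hcb := hcount b hwb
        have h1 : S.card ≤ T.card + ({j ∈ S | a j ∈ U}).card + ({j ∈ S | b j ∈ U}).card := by
          calc S.card ≤ (T ∪ {j ∈ S | a j ∈ U} ∪ {j ∈ S | b j ∈ U}).card :=
                Finset.card_le_card hsub
            _ ≤ (T ∪ {j ∈ S | a j ∈ U}).card + ({j ∈ S | b j ∈ U}).card :=
                Finset.card_union_le _ _
            _ ≤ T.card + ({j ∈ S | a j ∈ U}).card + ({j ∈ S | b j ∈ U}).card := by
                have := Finset.card_union_le T {j ∈ S | a j ∈ U}
                omega
        have hUr : U.card * r ≤ (2 * k + 1) * r := Nat.mul_le_mul_right r hUcard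
        nlinarith
      obtain ⟨j₀, hj₀S, hj₀T, haU, hbU⟩ := hfresh
      have haimg_e : a j₀ ∉ T.image e := fun h =>
        haU (Finset.mem_union.mpr (Or.inl (Finset.mem_union.mpr (Or.inl h))))
      have haimg_f : a j₀ ∉ T.image f := fun h =>
        haU (Finset.mem_union.mpr (Or.inl (Finset.mem_union.mpr (Or.inr h))))
      have hbimg_e : b j₀ ∉ T.image e := fun h =>
        hbU (Finset.mem_union.mpr (Or.inl (Finset.mem_union.mpr (Or.inl h))))
      have hbimg_f : b j₀ ∉ T.image f := fun h =>
        hbU (Finset.mem_union.mpr (Or.inl (Finset.mem_union.mpr (Or.inr h))))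
      have haf₀ : a j₀ ≠ f₀ := fun h =>
        haU (Finset.mem_union.mpr (Or.inr (Finset.mem_singleton.mpr h)))
      have hbf₀ : b j₀ ≠ f₀ := fun h =>
        hbU (Finset.mem_union.mpr (Or.inr (Finset.mem_singleton.mpr h)))
      have hab : a j₀ ≠ b j₀ := fun h => hSa j₀ hj₀S (h ▸ hvb j₀)
      refine ⟨insert j₀ T, Finset.insert_subset hj₀S hTS, ?_,
        Function.update e j₀ (a j₀), Function.update f j₀ (b j₀), ?_, ?_, ?_, ?_⟩
      · rw [Finset.card_insert_of_notMem hj₀T, hTcard]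
      · intro j hj
        rcases Finset.mem_insert.mp hj with rfl | hj
        · rw [Function.update_self, Function.update_self]
          exact ⟨haH _, hau _, haw _, hbH _, hvb _, hwb _, haf₀, hbf₀⟩
        · have hne : j ≠ j₀ := fun h => hj₀T (h ▸ hj)
          rw [Function.update_of_ne hne, Function.update_of_ne hne]
          exact hmem j hj
      · intro x hx y hy hxy
        simp only [Finset.coe_insert, Set.mem_insert_iff, Finset.mem_coe] at hx hy
        have hT' : ∀ z, z ∈ T → z ≠ j₀ := fun z hz h => hj₀T (h ▸ hz)
        rcases hx with rfl | hx <;> rcases hy with rfl | hy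
        · rfl
        · exfalso
          rw [Function.update_self, Function.update_of_ne (hT' y hy)] at hxy
          exact haimg_e (Finset.mem_image.mpr ⟨y, hy, hxy.symm⟩)
        · exfalso
          rw [Function.update_self, Function.update_of_ne (hT' x hx)] at hxy
          exact haimg_e (Finset.mem_image.mpr ⟨x, hx, hxy⟩)
        · rw [Function.update_of_ne (hT' x hx), Function.update_of_ne (hT' y hy)] at hxy
          exact hein hx hy hxy
      · intro x hx y hy hxy
        simp only [Finset.coe_insert, Set.mem_insert_iff, Finset.mem_coe] at hx hy
        have hT' : ∀ z, z ∈ T → z ≠ j₀ := fun z hz h => hj₀T (h ▸ hz)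
        rcases hx with rfl | hx <;> rcases hy with rfl | hy
        · rfl
        · exfalso
          rw [Function.update_self, Function.update_of_ne (hT' y hy)] at hxy
          exact hbimg_f (Finset.mem_image.mpr ⟨y, hy, hxy.symm⟩)
        · exfalso
          rw [Function.update_self, Function.update_of_ne (hT' x hx)] at hxy
          exact hbimg_f (Finset.mem_image.mpr ⟨x, hx, hxy⟩)
        · rw [Function.update_of_ne (hT' x hx), Function.update_of_ne (hT' y hy)] at hxy
          exact hfin hx hy hxy
      · intro j hj l hl
        have hT' : ∀ z, z ∈ T → z ≠ j₀ := fun z hz h => hj₀T (h ▸ hz)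
        rcases Finset.mem_insert.mp hj with rfl | hjT
        · rcases Finset.mem_insert.mp hl with rfl | hlT
          · rw [Function.update_self, Function.update_self]
            exact hab
          · rw [Function.update_self, Function.update_of_ne (hT' l hlT)]
            exact fun h => haimg_f (Finset.mem_image.mpr ⟨l, hlT, h.symm⟩)
        · rcases Finset.mem_insert.mp hl with heq | hlT
          · subst heq
            rw [Function.update_of_ne (hT' j hjT), Function.update_self]
            exact fun h => hbimg_e (Finset.mem_image.mpr ⟨j, hjT, h⟩)
          · rw [Function.update_of_ne (hT' j hjT), Function.update_of_ne (hT' l hlT)]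
            exact hef j hjT l hlT
  obtain ⟨T, hTS, hTcard, e, f, hmem, hein, hfin, hef⟩ := key t le_rfl
  -- assemble the Berge book
  set σ : Fin t → Fin (5 * r ^ 2 * t) := fun i => ↑(T.equivFin.symm (Fin.cast hTcard.symm i))
    with hσdef
  have hσT : ∀ i, σ i ∈ T := fun i => (T.equivFin.symm (Fin.cast hTcard.symm i)).2
  have hσinj : Function.Injective σ := by
    intro x y hxy
    have := Subtype.coe_injective hxy
    have := T.equivFin.symm.injective this
    exact Fin.cast_injective _ this
  refine ⟨u, v i0, fun i => w (σ i), f₀, fun i => e (σ i), fun i => f (σ i),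
    (hvu i0).symm, fun x y h => hσinj (hwinj h), fun i => hwu (σ i),
    fun i => (hvw i0 (σ i)).symm, hf₀H,
    fun i => (hmem _ (hσT i)).1, fun i => (hmem _ (hσT i)).2.2.2.1, huf₀, hvf₀,
    fun i => ⟨(hmem _ (hσT i)).2.1, (hmem _ (hσT i)).2.2.1⟩,
    fun i => ⟨(hmem _ (hσT i)).2.2.2.2.1, (hmem _ (hσT i)).2.2.2.2.2.1⟩,
    fun x y h => hσinj (hein (hσT x) (hσT y) h),
    fun x y h => hσinj (hfin (hσT x) (hσT y) h),
    fun i => (hmem _ (hσT i)).2.2.2.2.2.2.1,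
    fun i => (hmem _ (hσT i)).2.2.2.2.2.2.2,
    fun i j => hef _ (hσT i) _ (hσT j)⟩
end

section
/- If H is an r-uniform hypergraph that is Berge-B_t-free, then the subgraph G_2 of the shadow graph consisting of all edges lying in hyperedges all of whose pairs are 2t-heavy is B_t-free. More generally: for any graph F with p = |E(F)| edges, if H is Berge-F-free and H_2 denotes the subhypergraph of hyperedges all of whose vertex pairs are p-heavy in H, then the shadow graph of H_2 is F-free. -/
attribute [local instance] Classical.propDecidable

/-- The hypergraph `H` contains a Berge copy of the graph `F`: an injection `φ` of the
vertices of `F` and an injection `f` of the edges of `F` into hyperedges of `H`, such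
that `f(e)` contains (the image of) both endpoints of `e` for every edge `e`. -/
def HasBergeCopy {V W : Type*} [Fintype W] (H : Finset (Finset V))
    (F : SimpleGraph W) [DecidableRel F.Adj] : Prop :=
  ∃ (φ : W → V) (f : Sym2 W → Finset V),
    Function.Injective φ ∧ Set.InjOn f F.edgeFinset ∧
    ∀ e ∈ F.edgeFinset, f e ∈ H ∧ ∀ x ∈ e, φ x ∈ f e

/-- If `H` is Berge-`F`-free with `p = |E(F)|`, and `H₂` is the subhypergraph of
hyperedges all of whose vertex pairs are `p`-heavy in `H`, then the shadow graph of
`H₂` contains no copy of `F`. -/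
theorem shadow_of_heavy_part_F_free {V W : Type*} [Fintype W]
    (H : Finset (Finset V)) (F : SimpleGraph W) [DecidableRel F.Adj]
    (p : ℕ) (hp : p = F.edgeFinset.card)
    (hfree : ¬ HasBergeCopy H F)
    (H₂ : Finset (Finset V))
    (hH₂ : H₂ = H.filter (fun h => ∀ u ∈ h, ∀ v ∈ h, u ≠ v →
      p ≤ (H.filter (fun g => u ∈ g ∧ v ∈ g)).card)) :
    ¬ ∃ φ : W → V, Function.Injective φ ∧
      ∀ x y, F.Adj x y → (φ x ≠ φ y ∧ ∃ h ∈ H₂, φ x ∈ h ∧ φ y ∈ h) := by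
  classical
  rintro ⟨φ, hφ, hadj⟩
  apply hfree
  -- candidate sets for each edge
  let t : Sym2 W → Finset (Finset V) :=
    fun e => H.filter (fun g => ∀ x ∈ e, φ x ∈ g)
  -- each edge of F has at least p candidates
  have hcard : ∀ e ∈ F.edgeFinset, p ≤ (t e).card := by
    intro e he
    induction e using Sym2.ind with
    | _ x y =>
      rw [SimpleGraph.mem_edgeFinset, SimpleGraph.mem_edgeSet] at he
      obtain ⟨hne, h, hh, hx, hy⟩ := hadj x y he
      subst hH₂
      simp only [Finset.mem_filter] at hh
      refine le_trans (hh.2 (φ x) hx (φ y) hy hne) (Finset.card_le_card ?_)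
      intro g hg
      simp only [t, Finset.mem_filter] at hg ⊢
      refine ⟨hg.1, ?_⟩
      intro z hz
      rw [Sym2.mem_iff] at hz
      rcases hz with rfl | rfl
      · exact hg.2.1
      · exact hg.2.2
  -- Hall's condition on the subtype of edges
  have hall : ∀ s : Finset {e : Sym2 W // e ∈ F.edgeFinset},
      s.card ≤ (s.biUnion (fun e => t e.1)).card := by
    intro s
    rcases s.eq_empty_or_nonempty with rfl | ⟨e, he⟩
    · simp
    · have h1 : s.card ≤ Fintype.card {e : Sym2 W // e ∈ F.edgeFinset} :=
        Finset.card_le_univ s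
      rw [Fintype.card_coe] at h1
      calc s.card ≤ F.edgeFinset.card := h1
        _ = p := hp.symm
        _ ≤ (t e.1).card := hcard e.1 e.2
        _ ≤ _ := Finset.card_le_card
          (Finset.subset_biUnion_of_mem
            (fun e : {e : Sym2 W // e ∈ F.edgeFinset} => t e.1) he)
  obtain ⟨f, hfinj, hft⟩ :=
    (Finset.all_card_le_biUnion_card_iff_exists_injective
      (fun e : {e : Sym2 W // e ∈ F.edgeFinset} => t e.1)).mp hall
  refine ⟨φ, fun e => if h : e ∈ F.edgeFinset then f ⟨e, h⟩ else ∅, hφ, ?_, ?_⟩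
  · intro a ha b hb hab
    simp only [Finset.coe_sort_coe, Finset.mem_coe] at ha hb
    simp only [dif_pos ha, dif_pos hb] at hab
    exact congrArg Subtype.val (hfinj hab)
  · intro e he
    simp only [dif_pos he]
    have := hft ⟨e, he⟩
    simp only [t, Finset.mem_filter] at this
    exact ⟨this.1, this.2⟩
end

section
/- Heavy edges of a 'type 3' hyperedge form vertex-disjoint cliques: let H be a hypergraph and h ∈ H a hyperedge such that h contains no triangle {u,v,w} ⊆ h in which at least two of the pairs are heavy (contained in ≥ 2 hyperedges) and at least one pair is p-light. Then the graph on vertex set h whose edges are the heavy pairs inside h is a disjoint union of cliques, and every such clique of order ≥ 3 has all its edges p-heavy. -/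
attribute [local instance] Classical.propDecidable

/-- The pair `{u,v}` is heavy in `H` (contained in at least two hyperedges). -/
def Heavy {V : Type*} (H : Finset (Finset V)) (u v : V) : Prop :=
  2 ≤ (H.filter (fun g => u ∈ g ∧ v ∈ g)).card

/-- The pair `{u,v}` is `p`-heavy in `H` (contained in at least `p` hyperedges). -/
def PHeavy {V : Type*} (H : Finset (Finset V)) (p : ℕ) (u v : V) : Prop :=
  p ≤ (H.filter (fun g => u ∈ g ∧ v ∈ g)).card

/-- The pair `{u,v}` is `p`-light in `H` (contained in fewer than `p` hyperedges). -/
def PLight {V : Type*} (H : Finset (Finset V)) (p : ℕ) (u v : V) : Prop :=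
  (H.filter (fun g => u ∈ g ∧ v ∈ g)).card < p

/-- Heavy edges of a 'type 3' hyperedge form vertex-disjoint cliques: if `h ∈ H`
contains no triangle with at least two heavy pairs and at least one `p`-light pair,
then the heavy pairs inside `h` form a disjoint union of cliques (heaviness is
transitive inside `h`), and every heavy triangle inside `h` has all pairs `p`-heavy. -/
theorem heavy_edges_form_cliques {V : Type*} (H : Finset (Finset V)) (p : ℕ)
    (hp : 2 ≤ p) (h : Finset V) (hmem : h ∈ H)
    (hno : ¬ ∃ u v w : V, u ∈ h ∧ v ∈ h ∧ w ∈ h ∧ u ≠ v ∧ v ≠ w ∧ u ≠ w ∧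
      ((Heavy H u v ∧ Heavy H v w) ∨ (Heavy H u v ∧ Heavy H u w) ∨
        (Heavy H v w ∧ Heavy H u w)) ∧
      (PLight H p u v ∨ PLight H p v w ∨ PLight H p u w)) :
    (∀ u v w : V, u ∈ h → v ∈ h → w ∈ h → u ≠ v → v ≠ w → u ≠ w →
      Heavy H u v → Heavy H v w → Heavy H u w) ∧
    (∀ u v w : V, u ∈ h → v ∈ h → w ∈ h → u ≠ v → v ≠ w → u ≠ w →
      Heavy H u v → Heavy H v w → Heavy H u w →
      PHeavy H p u v ∧ PHeavy H p v w ∧ PHeavy H p u w) := by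
  have key : ∀ u v w : V, u ∈ h → v ∈ h → w ∈ h → u ≠ v → v ≠ w → u ≠ w →
      Heavy H u v → Heavy H v w →
      PHeavy H p u v ∧ PHeavy H p v w ∧ PHeavy H p u w := by
    intro u v w hu hv hw huv hvw huw h1 h2
    have hnl : ¬ (PLight H p u v ∨ PLight H p v w ∨ PLight H p u w) := by
      intro hl
      exact hno ⟨u, v, w, hu, hv, hw, huv, hvw, huw, Or.inl ⟨h1, h2⟩, hl⟩
    push_neg at hnl
    obtain ⟨a, b, c⟩ := hnl
    exact ⟨not_lt.mp a, not_lt.mp b, not_lt.mp c⟩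
  constructor
  · intro u v w hu hv hw huv hvw huw h1 h2
    have := (key u v w hu hv hw huv hvw huw h1 h2).2.2
    exact le_trans hp this
  · intro u v w hu hv hw huv hvw huw h1 h2 _
    exact key u v w hu hv hw huv hvw huw h1 h2
end

section
/- If a graph on r vertices has its edge set partitioned so that the 'heavy' edges form vertex-disjoint cliques each of order at most k (where 1 ≤ k ≤ r-1), then the number of non-heavy edges between distinct cliques (counting singletons as cliques of order 1) is at least k(r-k). -/
lemma two_choose_two (n : ℕ) : 2 * n.choose 2 + n = n * n := by
  induction n with
  | zero => rfl
  | succ m ih =>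
    rw [Nat.choose_succ_succ]
    simp only [Nat.choose_one_right]
    nlinarith [ih]

lemma sum_sq_bound (k : ℕ) : ∀ (s : ℕ) (a : Fin s → ℕ), (∀ i, a i ≤ k) →
    (∑ i, a i * a i) ≤ (∑ i, a i) * (∑ i, a i) ∧
    (∑ i, a i * a i) + 2 * k * (∑ i, a i) ≤ 2 * k * k + (∑ i, a i) * (∑ i, a i) := by
  intro s
  induction s with
  | zero => intro a _; simp
  | succ m ih =>
    intro a ha
    obtain ⟨h1, h2⟩ := ih (fun i => a i.succ) (fun i => ha i.succ)
    rw [Fin.sum_univ_succ (f := fun i => a i * a i), Fin.sum_univ_succ (f := fun i => a i)]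
    set S := ∑ i : Fin m, a i.succ with hS
    have h0 : a 0 ≤ k := ha 0
    constructor
    · nlinarith
    · rcases le_or_gt k S with h | h
      · nlinarith
      · nlinarith

/-- If an `r`-element vertex set is partitioned into parts of sizes `a_1, ..., a_s`,
each of size at most `k` (with `1 ≤ k ≤ r - 1`), then the number of cross pairs
`C(r,2) - Σᵢ C(aᵢ,2)` is at least `k(r-k)`. -/
theorem cross_pairs_ge (r k s : ℕ) (hk1 : 1 ≤ k) (hkr : k ≤ r - 1)
    (a : Fin s → ℕ) (ha : ∀ i, a i ≤ k) (hsum : ∑ i, a i = r) :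
    ∑ i, (a i).choose 2 + k * (r - k) ≤ r.choose 2 := by
  have hkr' : k + 1 ≤ r := by omega
  obtain ⟨m, hm⟩ : ∃ m, r = k + m := ⟨r - k, by omega⟩
  have hrk : r - k = m := by omega
  obtain ⟨h1, h2⟩ := sum_sq_bound k s a ha
  rw [hsum] at h1 h2
  have hsq : ∑ i, (2 * (a i).choose 2 + a i) = ∑ i, a i * a i :=
    Finset.sum_congr rfl (fun i _ => two_choose_two (a i))
  rw [Finset.sum_add_distrib, ← Finset.mul_sum, hsum] at hsq
  have h3 := two_choose_two r
  rw [hrk]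
  nlinarith [hsq, h2, h3]
end

section
/- Let H be a 3-uniform Berge-B_2-free hypergraph and let u, v, u', v' be four distinct vertices with uv and u'v' designated edges. If all four of the sets {u,v,u'}, {u,v,v'}, {u,u',v'}, {v,u',v'} are hyperedges of H, then no vertex x outside {u,v,u',v'} is joined in the shadow graph to two vertices among {u,v} (i.e., no x has both ux and vx in the shadow graph). -/
/-- Let `H` be a 3-uniform Berge-`B₂`-free hypergraph and `u, v, u', v'` four distinct
vertices with all four of `{u,v,u'}`, `{u,v,v'}`, `{u,u',v'}`, `{v,u',v'}` hyperedges
of `H`.  Then no vertex `x` outside `{u,v,u',v'}` is joined in the shadow graph to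
both `u` and `v`. -/
theorem no_common_shadow_neighbor {V : Type*} [DecidableEq V]
    (H : Finset (Finset V)) (huniform : ∀ h ∈ H, h.card = 3)
    (hfree : ¬ HasBergeBook H 2)
    (u v u' v' : V)
    (hdist : u ≠ v ∧ u ≠ u' ∧ u ≠ v' ∧ v ≠ u' ∧ v ≠ v' ∧ u' ≠ v')
    (h1 : ({u, v, u'} : Finset V) ∈ H) (h2 : ({u, v, v'} : Finset V) ∈ H)
    (h3 : ({u, u', v'} : Finset V) ∈ H) (h4 : ({v, u', v'} : Finset V) ∈ H)
    (x : V) (hx : x ≠ u ∧ x ≠ v ∧ x ≠ u' ∧ x ≠ v') :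
    ¬ ((∃ h ∈ H, u ∈ h ∧ x ∈ h) ∧ (∃ h ∈ H, v ∈ h ∧ x ∈ h)) := by

  rintro ⟨⟨hu, huH, huu, hux⟩, ⟨hv, hvH, hvv, hvx⟩⟩
  obtain ⟨duv, duu', duv', dvu', dvv', du'v'⟩ := hdist
  obtain ⟨dxu, dxv, dxu', dxv'⟩ := hx
  apply hfree
  have hxhu : x ∉ ({u, v, u'} : Finset V) := by simp [dxu, dxv, dxu']
  have hxh2 : x ∉ ({u, v, v'} : Finset V) := by simp [dxu, dxv, dxv']
  have hxh3 : x ∉ ({u, u', v'} : Finset V) := by simp [dxu, dxu', dxv']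
  have hxh4 : x ∉ ({v, u', v'} : Finset V) := by simp [dxv, dxu', dxv']
  have n12 : ({u, v, u'} : Finset V) ≠ {u, v, v'} :=
    fun h => absurd (h ▸ (show u' ∈ ({u, v, u'} : Finset V) by simp))
      (by simp [duu'.symm, dvu'.symm, du'v'])
  have n14 : ({u, v, u'} : Finset V) ≠ {v, u', v'} :=
    fun h => absurd (h ▸ (show u ∈ ({u, v, u'} : Finset V) by simp))
      (by simp [duv, duu', duv'])
  have n13 : ({u, v, u'} : Finset V) ≠ {u, u', v'} :=
    fun h => absurd (h ▸ (show v ∈ ({u, v, u'} : Finset V) by simp))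
      (by simp [duv.symm, dvu', dvv'])
  have n42 : ({v, u', v'} : Finset V) ≠ {u, v, v'} :=
    fun h => absurd (h ▸ (show u' ∈ ({v, u', v'} : Finset V) by simp))
      (by simp [duu'.symm, dvu'.symm, du'v'])
  have n34 : ({u, u', v'} : Finset V) ≠ {v, u', v'} :=
    fun h => absurd (h ▸ (show u ∈ ({u, u', v'} : Finset V) by simp))
      (by simp [duv, duu', duv'])
  have n32 : ({u, u', v'} : Finset V) ≠ {u, v, v'} :=
    fun h => absurd (h ▸ (show u' ∈ ({u, u', v'} : Finset V) by simp))
      (by simp [duu'.symm, dvu'.symm, du'v'])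
  by_cases hcase : hu = hv
  · -- hu contains u, v, x so hu = {u, v, x}
    have nu1 : ({u, v, u'} : Finset V) ≠ hu := fun h => hxhu (h ▸ hux)
    have nu3 : ({u, u', v'} : Finset V) ≠ hu := fun h => hxh3 (h ▸ hux)
    have nu4 : ({v, u', v'} : Finset V) ≠ hu := fun h => hxh4 (h ▸ hux)
    have nu2 : ({u, v, v'} : Finset V) ≠ hu := fun h => hxh2 (h ▸ hux)
    refine ⟨u, v, ![u', v'], hu, ![{u, v, u'}, {u, u', v'}], ![{v, u', v'}, {u, v, v'}],
      duv, ?_, ?_, ?_, huH, ?_, ?_, huu, hcase ▸ hvv, ?_, ?_, ?_, ?_, ?_, ?_, ?_⟩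
    · intro i j hij; fin_cases i <;> fin_cases j <;> simp_all [du'v']
    · intro i; fin_cases i
      · simpa using duu'.symm
      · simpa using duv'.symm
    · intro i; fin_cases i
      · simpa using dvu'.symm
      · simpa using dvv'.symm
    · intro i; fin_cases i
      · simpa using h1
      · simpa using h3
    · intro i; fin_cases i
      · simpa using h4
      · simpa using h2
    · intro i; fin_cases i <;> simp
    · intro i; fin_cases i <;> simp
    · intro i j hij; fin_cases i <;> fin_cases j <;> simp_all
    · intro i j hij; fin_cases i <;> fin_cases j <;> simp_all
    · intro i; fin_cases i
      · simpa using nu1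
      · simpa using nu3
    · intro i; fin_cases i
      · simpa using nu4
      · simpa using nu2
    · intro i j; fin_cases i <;> fin_cases j
      · simpa using n14
      · simpa using n12
      · simpa using n34
      · simpa using n32
  · -- hu ≠ hv : pages x and u'
    have nu1 : hu ≠ ({u, v, u'} : Finset V) := fun h => hxhu (h ▸ hux)
    have nu2 : hu ≠ ({u, v, v'} : Finset V) := fun h => hxh2 (h ▸ hux)
    have nu4 : hu ≠ ({v, u', v'} : Finset V) := fun h => hxh4 (h ▸ hux)
    have nv1 : hv ≠ ({u, v, u'} : Finset V) := fun h => hxhu (h ▸ hvx)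
    have nv2 : hv ≠ ({u, v, v'} : Finset V) := fun h => hxh2 (h ▸ hvx)
    have nv4 : hv ≠ ({v, u', v'} : Finset V) := fun h => hxh4 (h ▸ hvx)
    refine ⟨u, v, ![x, u'], {u, v, v'}, ![hu, {u, v, u'}], ![hv, {v, u', v'}],
      duv, ?_, ?_, ?_, h2, ?_, ?_, by simp, by simp, ?_, ?_, ?_, ?_, ?_, ?_, ?_⟩
    · intro i j hij; fin_cases i <;> fin_cases j <;> simp_all [dxu']
    · intro i; fin_cases i
      · simpa using dxu
      · simpa using duu'.symm
    · intro i; fin_cases i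
      · simpa using dxv
      · simpa using dvu'.symm
    · intro i; fin_cases i
      · simpa using huH
      · simpa using h1
    · intro i; fin_cases i
      · simpa using hvH
      · simpa using h4
    · intro i; fin_cases i
      · simpa using ⟨huu, hux⟩
      · simp
    · intro i; fin_cases i
      · simpa using ⟨hvv, hvx⟩
      · simp
    · intro i j hij; fin_cases i <;> fin_cases j <;> simp_all
    · intro i j hij; fin_cases i <;> fin_cases j <;> simp_all
    · intro i; fin_cases i
      · simpa using nu2
      · simpa using n12
    · intro i; fin_cases i
      · simpa using nv2
      · simpa using n42
    · intro i j; fin_cases i <;> fin_cases j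
      · simpa using hcase
      · simpa using nu4
      · simpa using nv1.symm
      · simpa using n14
end

section
/- Construction 3 is Berge-B_t-free for t > 2: form a 3-uniform hypergraph as follows. Take m disjoint 'left twin' pairs {a_i, b_i} (i = 1,...,m) and m' disjoint 'right twin' pairs {c_j, d_j} (j = 1,...,m'), all vertices distinct, with m, m' ≥ t-1. The hyperedges are: (1) {a_i, b_i, x} for all i ≤ t-1 and every right vertex x; (2) {c_j, d_j, y} for all j ≤ t-1 and every left vertex y not in {a_1,b_1,...,a_{t-1},b_{t-1}}; (3) {a_i, c_j, d_j} for all i, j ≤ t-1. Then this hypergraph contains no Berge copy of the book B_t. -/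
/-- Construction 3 is Berge-`B_t`-free for `t ≥ 3`.  Take `m ≥ t-1` disjoint left twin
pairs `{a_i, b_i}` and `m' ≥ t-1` disjoint right twin pairs `{c_j, d_j}`, all vertices
distinct.  The hyperedges are: `{a_i, b_i, x}` for `i ≤ t-1` and any right vertex `x`;
`{c_j, d_j, y}` for `j ≤ t-1` and any left vertex `y` not among the first `t-1` left
twin pairs; and `{a_i, c_j, d_j}` for `i, j ≤ t-1`.  The result has no Berge-`B_t`. -/
theorem construction3_bergeBookFree {V : Type*} [DecidableEq V]
    (t m m' : ℕ) (ht : 3 ≤ t) (hm : t - 1 ≤ m) (hm' : t - 1 ≤ m')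
    (a b : Fin m → V) (c d : Fin m' → V)
    (hinj : Function.Injective
      (fun x : (Fin m ⊕ Fin m) ⊕ (Fin m' ⊕ Fin m') =>
        Sum.elim (Sum.elim a b) (Sum.elim c d) x))
    (L R : Finset V)
    (hL : L = Finset.image a Finset.univ ∪ Finset.image b Finset.univ)
    (hR : R = Finset.image c Finset.univ ∪ Finset.image d Finset.univ)
    (H : Finset (Finset V))
    (hH : ∀ h : Finset V, h ∈ H ↔
      ((∃ i : Fin m, (i : ℕ) < t - 1 ∧ ∃ x ∈ R, h = {a i, b i, x}) ∨
       (∃ j : Fin m', (j : ℕ) < t - 1 ∧ ∃ y ∈ L,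
          (∀ i : Fin m, (i : ℕ) < t - 1 → y ≠ a i ∧ y ≠ b i) ∧ h = {c j, d j, y}) ∨
       (∃ (i : Fin m) (j : Fin m'), (i : ℕ) < t - 1 ∧ (j : ℕ) < t - 1 ∧
          h = {a i, c j, d j}))) :
    ¬ HasBergeBook H t := by
  -- basic distinctness facts
  have ha : Function.Injective a := fun i i' h => by
    have := @hinj (.inl (.inl i)) (.inl (.inl i')) h; simpa using this
  have hb : Function.Injective b := fun i i' h => by
    have := @hinj (.inl (.inr i)) (.inl (.inr i')) h; simpa using this
  have hc : Function.Injective c := fun i i' h => by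
    have := @hinj (.inr (.inl i)) (.inr (.inl i')) h; simpa using this
  have hd : Function.Injective d := fun i i' h => by
    have := @hinj (.inr (.inr i)) (.inr (.inr i')) h; simpa using this
  have hab : ∀ i i', a i ≠ b i' := fun i i' h => by
    have := @hinj (.inl (.inl i)) (.inl (.inr i')) h; simp at this
  have hac : ∀ i j, a i ≠ c j := fun i j h => by
    have := @hinj (.inl (.inl i)) (.inr (.inl j)) h; simp at this
  have had : ∀ i j, a i ≠ d j := fun i j h => by
    have := @hinj (.inl (.inl i)) (.inr (.inr j)) h; simp at this
  have hbc : ∀ i j, b i ≠ c j := fun i j h => by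
    have := @hinj (.inl (.inr i)) (.inr (.inl j)) h; simp at this
  have hbd : ∀ i j, b i ≠ d j := fun i j h => by
    have := @hinj (.inl (.inr i)) (.inr (.inr j)) h; simp at this
  have hcd : ∀ j j', c j ≠ d j' := fun j j' h => by
    have := @hinj (.inr (.inl j)) (.inr (.inr j')) h; simp at this
  have hba : ∀ i i', b i ≠ a i' := fun i i' h => (hab i' i h.symm).elim
  have hca : ∀ j i, c j ≠ a i := fun j i h => (hac i j h.symm).elim
  have hda : ∀ j i, d j ≠ a i := fun j i h => (had i j h.symm).elim
  have hcb : ∀ j i, c j ≠ b i := fun j i h => (hbc i j h.symm).elim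
  have hdb : ∀ j i, d j ≠ b i := fun j i h => (hbd i j h.symm).elim
  have hdc : ∀ j j', d j ≠ c j' := fun j j' h => (hcd j' j h.symm).elim
  have hLmem : ∀ y ∈ L, ∃ i, y = a i ∨ y = b i := by
    intro y hy
    rw [hL] at hy
    simp only [Finset.mem_union, Finset.mem_image, Finset.mem_univ, true_and] at hy
    rcases hy with ⟨i, hi⟩ | ⟨i, hi⟩
    exacts [⟨i, Or.inl hi.symm⟩, ⟨i, Or.inr hi.symm⟩]
  have hRmem : ∀ x ∈ R, ∃ j, x = c j ∨ x = d j := by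
    intro x hx
    rw [hR] at hx
    simp only [Finset.mem_union, Finset.mem_image, Finset.mem_univ, true_and] at hx
    rcases hx with ⟨j, hj⟩ | ⟨j, hj⟩
    exacts [⟨j, Or.inl hj.symm⟩, ⟨j, Or.inr hj.symm⟩]
  -- pigeonhole : no injection Fin t → first (t-1) indices
  have pig : ∀ {n : ℕ} (g : Fin t → Fin n), Function.Injective g →
      (∀ k, (g k : ℕ) < t - 1) → False := by
    intro n g hg hlt
    have hcard : (Finset.image (fun k => (g k : ℕ)) Finset.univ).card = t := by
      rw [Finset.card_image_of_injective _ (show Function.Injective fun k => ((g k : ℕ)) from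
        fun k l h => hg (Fin.val_injective h)), Finset.card_univ, Fintype.card_fin]
    have hsub : Finset.image (fun k => (g k : ℕ)) Finset.univ ⊆ Finset.range (t - 1) := by
      intro x hx
      simp only [Finset.mem_image, Finset.mem_univ, true_and] at hx
      obtain ⟨k, rfl⟩ := hx
      exact Finset.mem_range.2 (hlt k)
    have := Finset.card_le_card hsub
    rw [hcard, Finset.card_range] at this
    omega
  -- t ≥ 3 injective values can't fit into two vertices
  have two : ∀ (w : Fin t → V), Function.Injective w → ∀ x y : V,
      (∀ k, w k = x ∨ w k = y) → False := by
    intro w hw x y hxy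
    have h0 := hxy ⟨0, by omega⟩
    have h1 := hxy ⟨1, by omega⟩
    have h2 := hxy ⟨2, by omega⟩
    rcases h0 with h0 | h0 <;> rcases h1 with h1 | h1 <;> rcases h2 with h2 | h2 <;>
      [ exact absurd (congrArg Fin.val (hw (h0.trans h1.symm))) (by norm_num);
        exact absurd (congrArg Fin.val (hw (h0.trans h1.symm))) (by norm_num);
        exact absurd (congrArg Fin.val (hw (h0.trans h2.symm))) (by norm_num);
        exact absurd (congrArg Fin.val (hw (h1.trans h2.symm))) (by norm_num);
        exact absurd (congrArg Fin.val (hw (h1.trans h2.symm))) (by norm_num);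
        exact absurd (congrArg Fin.val (hw (h0.trans h2.symm))) (by norm_num);
        exact absurd (congrArg Fin.val (hw (h0.trans h1.symm))) (by norm_num);
        exact absurd (congrArg Fin.val (hw (h0.trans h1.symm))) (by norm_num)]
  -- classification of vertices in edges
  have hmem3 : ∀ (p q r z : V), z ∈ ({p, q, r} : Finset V) ↔ z = p ∨ z = q ∨ z = r := by
    intro p q r z; simp [Finset.mem_insert]
  have hvert : ∀ h ∈ H, ∀ z ∈ h, (∃ i, z = a i ∨ z = b i) ∨ (∃ j, z = c j ∨ z = d j) := by
    intro h hh z hz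
    rcases (hH h).1 hh with ⟨i, _, x, hx, rfl⟩ | ⟨j, _, y, hy, _, rfl⟩ | ⟨i, j, _, _, rfl⟩
    · rw [hmem3] at hz
      rcases hz with rfl | rfl | hzx
      · exact Or.inl ⟨i, Or.inl rfl⟩
      · exact Or.inl ⟨i, Or.inr rfl⟩
      · rw [hzx]; exact Or.inr (hRmem x hx)
    · rw [hmem3] at hz
      rcases hz with rfl | rfl | hzy
      · exact Or.inr ⟨j, Or.inl rfl⟩
      · exact Or.inr ⟨j, Or.inr rfl⟩
      · rw [hzy]; exact Or.inl (hLmem y hy)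
    · rw [hmem3] at hz
      rcases hz with rfl | rfl | rfl
      · exact Or.inl ⟨i, Or.inl rfl⟩
      · exact Or.inr ⟨j, Or.inl rfl⟩
      · exact Or.inr ⟨j, Or.inr rfl⟩
  -- S1 : edges containing b i (i small) are type-1 at pair i
  have S1 : ∀ h ∈ H, ∀ i : Fin m, (i : ℕ) < t - 1 → b i ∈ h →
      ∃ x, (∃ j, x = c j ∨ x = d j) ∧ h = {a i, b i, x} := by
    intro h hh i hi hbi
    rcases (hH h).1 hh with ⟨i', _, x, hx, rfl⟩ | ⟨j, _, y, hy, hyav, rfl⟩ | ⟨i', j, _, _, rfl⟩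
    · rw [hmem3] at hbi
      rcases hbi with h1 | h1 | h1
      · exact absurd h1 (hba i i')
      · cases hb h1; exact ⟨x, hRmem x hx, rfl⟩
      · obtain ⟨j, hj | hj⟩ := hRmem x hx <;> rw [hj] at h1
        · exact absurd h1 (hbc i j)
        · exact absurd h1 (hbd i j)
    · rw [hmem3] at hbi
      rcases hbi with h1 | h1 | h1
      · exact absurd h1 (hbc i j)
      · exact absurd h1 (hbd i j)
      · exact absurd h1.symm (hyav i hi).2
    · rw [hmem3] at hbi
      rcases hbi with h1 | h1 | h1
      · exact absurd h1 (hba i i')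
      · exact absurd h1 (hbc i j)
      · exact absurd h1 (hbd i j)
  -- S2 : edges containing a i (i small)
  have S2 : ∀ h ∈ H, ∀ i : Fin m, (i : ℕ) < t - 1 → a i ∈ h →
      (∃ x, (∃ j, x = c j ∨ x = d j) ∧ h = {a i, b i, x}) ∨
      (∃ j : Fin m', (j : ℕ) < t - 1 ∧ h = {a i, c j, d j}) := by
    intro h hh i hi hai
    rcases (hH h).1 hh with ⟨i', _, x, hx, rfl⟩ | ⟨j, _, y, hy, hyav, rfl⟩ | ⟨i', j, _, hj, rfl⟩
    · rw [hmem3] at hai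
      rcases hai with h1 | h1 | h1
      · cases ha h1; exact Or.inl ⟨x, hRmem x hx, rfl⟩
      · exact absurd h1 (hab i i')
      · obtain ⟨j, hj | hj⟩ := hRmem x hx <;> rw [hj] at h1
        · exact absurd h1 (hac i j)
        · exact absurd h1 (had i j)
    · rw [hmem3] at hai
      rcases hai with h1 | h1 | h1
      · exact absurd h1 (hac i j)
      · exact absurd h1 (had i j)
      · exact absurd h1.symm (hyav i hi).1
    · rw [hmem3] at hai
      rcases hai with h1 | h1 | h1
      · cases ha h1; exact Or.inr ⟨j, hj, rfl⟩
      · exact absurd h1 (hac i j)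
      · exact absurd h1 (had i j)
  -- S3 : edges containing a left vertex outside the first t-1 pairs
  have S3 : ∀ h ∈ H, ∀ (z : V) (i : Fin m), (z = a i ∨ z = b i) → ¬ ((i : ℕ) < t - 1) →
      z ∈ h → ∃ j : Fin m', (j : ℕ) < t - 1 ∧ h = {c j, d j, z} := by
    intro h hh z i hz hi hzh
    rcases (hH h).1 hh with ⟨i', hi', x, hx, rfl⟩ | ⟨j, hj, y, hy, hyav, rfl⟩ | ⟨i', j, hi', _, rfl⟩
    · rw [hmem3] at hzh
      rcases hz with rfl | rfl
      · rcases hzh with h1 | h1 | h1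
        · cases ha h1; exact absurd hi' hi
        · exact absurd h1 (hab i i')
        · obtain ⟨j, hj | hj⟩ := hRmem x hx <;> rw [hj] at h1
          · exact absurd h1 (hac i j)
          · exact absurd h1 (had i j)
      · rcases hzh with h1 | h1 | h1
        · exact absurd h1 (hba i i')
        · cases hb h1; exact absurd hi' hi
        · obtain ⟨j, hj | hj⟩ := hRmem x hx <;> rw [hj] at h1
          · exact absurd h1 (hbc i j)
          · exact absurd h1 (hbd i j)
    · rw [hmem3] at hzh
      rcases hzh with h1 | h1 | h1
      · rcases hz with rfl | rfl
        · exact absurd h1 (hac i j)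
        · exact absurd h1 (hbc i j)
      · rcases hz with rfl | rfl
        · exact absurd h1 (had i j)
        · exact absurd h1 (hbd i j)
      · exact ⟨j, hj, by rw [h1]⟩
    · rw [hmem3] at hzh
      rcases hzh with h1 | h1 | h1
      · rcases hz with rfl | rfl
        · cases ha h1; exact absurd hi' hi
        · exact absurd h1 (hba i i')
      · rcases hz with rfl | rfl
        · exact absurd h1 (hac i j)
        · exact absurd h1 (hbc i j)
      · rcases hz with rfl | rfl
        · exact absurd h1 (had i j)
        · exact absurd h1 (hbd i j)
  -- S5 : two distinct right vertices in an edge form a twin pair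
  have S5 : ∀ h ∈ H, ∀ p q : V, p ∈ h → q ∈ h → p ≠ q →
      (∃ jp, p = c jp ∨ p = d jp) → (∃ jq, q = c jq ∨ q = d jq) →
      ∃ j : Fin m', (p = c j ∧ q = d j) ∨ (p = d j ∧ q = c j) := by
    intro h hh p q hp hq hpq ⟨jp, hjp⟩ ⟨jq, hjq⟩
    rcases (hH h).1 hh with ⟨i, _, x, hx, rfl⟩ | ⟨j, _, y, hy, _, rfl⟩ | ⟨i, j, _, _, rfl⟩
    · rw [hmem3] at hp hq
      have hpx : p = x := by
        rcases hp with h1 | h1 | h1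
        · rcases hjp with rfl | rfl
          · exact absurd h1 (hca jp i)
          · exact absurd h1 (hda jp i)
        · rcases hjp with rfl | rfl
          · exact absurd h1 (hcb jp i)
          · exact absurd h1 (hdb jp i)
        · exact h1
      have hqx : q = x := by
        rcases hq with h1 | h1 | h1
        · rcases hjq with rfl | rfl
          · exact absurd h1 (hca jq i)
          · exact absurd h1 (hda jq i)
        · rcases hjq with rfl | rfl
          · exact absurd h1 (hcb jq i)
          · exact absurd h1 (hdb jq i)
        · exact h1
      exact absurd (hpx.trans hqx.symm) hpq
    · obtain ⟨iy, hiy⟩ := hLmem y hy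
      rw [hmem3] at hp hq
      have hp' : p = c j ∨ p = d j := by
        rcases hp with h1 | h1 | h1
        · exact Or.inl h1
        · exact Or.inr h1
        · rcases hjp with rfl | rfl <;> rcases hiy with rfl | rfl
          · exact absurd h1 (hca jp iy)
          · exact absurd h1 (hcb jp iy)
          · exact absurd h1 (hda jp iy)
          · exact absurd h1 (hdb jp iy)
      have hq' : q = c j ∨ q = d j := by
        rcases hq with h1 | h1 | h1
        · exact Or.inl h1
        · exact Or.inr h1
        · rcases hjq with rfl | rfl <;> rcases hiy with rfl | rfl
          · exact absurd h1 (hca jq iy)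
          · exact absurd h1 (hcb jq iy)
          · exact absurd h1 (hda jq iy)
          · exact absurd h1 (hdb jq iy)
      rcases hp' with rfl | rfl <;> rcases hq' with h2 | h2
      · exact absurd h2.symm hpq
      · exact ⟨j, Or.inl ⟨rfl, h2⟩⟩
      · exact ⟨j, Or.inr ⟨rfl, h2⟩⟩
      · exact absurd h2.symm hpq
    · rw [hmem3] at hp hq
      have hp' : p = c j ∨ p = d j := by
        rcases hp with h1 | h1 | h1
        · rcases hjp with rfl | rfl
          · exact absurd h1 (hca jp i)
          · exact absurd h1 (hda jp i)
        · exact Or.inl h1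
        · exact Or.inr h1
      have hq' : q = c j ∨ q = d j := by
        rcases hq with h1 | h1 | h1
        · rcases hjq with rfl | rfl
          · exact absurd h1 (hca jq i)
          · exact absurd h1 (hda jq i)
        · exact Or.inl h1
        · exact Or.inr h1
      rcases hp' with rfl | rfl <;> rcases hq' with h2 | h2
      · exact absurd h2.symm hpq
      · exact ⟨j, Or.inl ⟨rfl, h2⟩⟩
      · exact ⟨j, Or.inr ⟨rfl, h2⟩⟩
      · exact absurd h2.symm hpq
  -- S6 : two distinct left vertices in an edge form a twin pair with small index
  have S6 : ∀ h ∈ H, ∀ p q : V, p ∈ h → q ∈ h → p ≠ q →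
      (∃ ip, p = a ip ∨ p = b ip) → (∃ iq, q = a iq ∨ q = b iq) →
      ∃ i : Fin m, (i : ℕ) < t - 1 ∧ ((p = a i ∧ q = b i) ∨ (p = b i ∧ q = a i)) := by
    intro h hh p q hp hq hpq ⟨ip, hip⟩ ⟨iq, hiq⟩
    rcases (hH h).1 hh with ⟨i, hi, x, hx, rfl⟩ | ⟨j, _, y, hy, _, rfl⟩ | ⟨i, j, _, _, rfl⟩
    · obtain ⟨jx, hjx⟩ := hRmem x hx
      rw [hmem3] at hp hq
      have hp' : p = a i ∨ p = b i := by
        rcases hp with h1 | h1 | h1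
        · exact Or.inl h1
        · exact Or.inr h1
        · rcases hjx with rfl | rfl <;> rcases hip with rfl | rfl
          · exact absurd h1 (hac ip jx)
          · exact absurd h1 (hbc ip jx)
          · exact absurd h1 (had ip jx)
          · exact absurd h1 (hbd ip jx)
      have hq' : q = a i ∨ q = b i := by
        rcases hq with h1 | h1 | h1
        · exact Or.inl h1
        · exact Or.inr h1
        · rcases hjx with rfl | rfl <;> rcases hiq with rfl | rfl
          · exact absurd h1 (hac iq jx)
          · exact absurd h1 (hbc iq jx)
          · exact absurd h1 (had iq jx)
          · exact absurd h1 (hbd iq jx)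
      rcases hp' with rfl | rfl <;> rcases hq' with h2 | h2
      · exact absurd h2.symm hpq
      · exact ⟨i, hi, Or.inl ⟨rfl, h2⟩⟩
      · exact ⟨i, hi, Or.inr ⟨rfl, h2⟩⟩
      · exact absurd h2.symm hpq
    · rw [hmem3] at hp hq
      have hpy : p = y := by
        rcases hp with h1 | h1 | h1
        · rcases hip with rfl | rfl
          · exact absurd h1 (hac ip j)
          · exact absurd h1 (hbc ip j)
        · rcases hip with rfl | rfl
          · exact absurd h1 (had ip j)
          · exact absurd h1 (hbd ip j)
        · exact h1
      have hqy : q = y := by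
        rcases hq with h1 | h1 | h1
        · rcases hiq with rfl | rfl
          · exact absurd h1 (hac iq j)
          · exact absurd h1 (hbc iq j)
        · rcases hiq with rfl | rfl
          · exact absurd h1 (had iq j)
          · exact absurd h1 (hbd iq j)
        · exact h1
      exact absurd (hpy.trans hqy.symm) hpq
    · rw [hmem3] at hp hq
      have hpy : p = a i := by
        rcases hp with h1 | h1 | h1
        · exact h1
        · rcases hip with rfl | rfl
          · exact absurd h1 (hac ip j)
          · exact absurd h1 (hbc ip j)
        · rcases hip with rfl | rfl
          · exact absurd h1 (had ip j)
          · exact absurd h1 (hbd ip j)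
      have hqy : q = a i := by
        rcases hq with h1 | h1 | h1
        · exact h1
        · rcases hiq with rfl | rfl
          · exact absurd h1 (hac iq j)
          · exact absurd h1 (hbc iq j)
        · rcases hiq with rfl | rfl
          · exact absurd h1 (had iq j)
          · exact absurd h1 (hbd iq j)
      exact absurd (hpy.trans hqy.symm) hpq
  -- AO : a hub outside the first t-1 left pairs is impossible
  have AO : ∀ (u : V) (fu : Fin t → Finset V) (i : Fin m), (u = a i ∨ u = b i) →
      ¬ ((i : ℕ) < t - 1) → (∀ k, fu k ∈ H) → (∀ k, u ∈ fu k) →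
      Function.Injective fu → False := by
    intro u fu i hu hi hfuH hufu hfuinj
    choose j hjlt hjeq using fun k => S3 (fu k) (hfuH k) u i hu hi (hufu k)
    refine pig j (fun k l hkl => hfuinj ?_) hjlt
    rw [hjeq k, hjeq l, hkl]
  -- AM : one hub a small left vertex, the other right, is impossible
  have AM : ∀ (u v : V) (w : Fin t → V) (fu fv : Fin t → Finset V) (i : Fin m),
      (u = a i ∨ u = b i) → (i : ℕ) < t - 1 → (∃ j, v = c j ∨ v = d j) →
      Function.Injective w → (∀ k, w k ≠ u) → (∀ k, w k ≠ v) →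
      (∀ k, fu k ∈ H) → (∀ k, fv k ∈ H) →
      (∀ k, u ∈ fu k ∧ w k ∈ fu k) → (∀ k, v ∈ fv k ∧ w k ∈ fv k) → False := by
    intro u v w fu fv i hu hi hv hwinj hwu hwv hfuH hfvH hufu hvfv
    obtain ⟨j, hvj⟩ := hv
    obtain ⟨T, hT⟩ : ∃ T, ∀ k, (∃ j', w k = c j' ∨ w k = d j') → w k = T := by
      rcases hvj with rfl | rfl
      · refine ⟨d j, fun k hk => ?_⟩
        obtain ⟨j', h'⟩ := S5 (fv k) (hfvH k) (c j) (w k) (hvfv k).1 (hvfv k).2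
          (Ne.symm (hwv k)) ⟨j, Or.inl rfl⟩ hk
        rcases h' with ⟨h1, h2⟩ | ⟨h1, h2⟩
        · cases hc h1; exact h2
        · exact absurd h1 (hcd j j')
      · refine ⟨c j, fun k hk => ?_⟩
        obtain ⟨j', h'⟩ := S5 (fv k) (hfvH k) (d j) (w k) (hvfv k).1 (hvfv k).2
          (Ne.symm (hwv k)) ⟨j, Or.inr rfl⟩ hk
        rcases h' with ⟨h1, h2⟩ | ⟨h1, h2⟩
        · exact absurd h1 (hdc j j')
        · cases hd h1; exact h2
    rcases hu with rfl | rfl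
    · refine two w hwinj (b i) T (fun k => ?_)
      rcases S2 (fu k) (hfuH k) i hi (hufu k).1 with ⟨x, hx, he⟩ | ⟨j', _, he⟩
      · have hmm := (hufu k).2
        rw [he, hmem3] at hmm
        rcases hmm with h1 | h1 | h1
        · exact absurd h1 (hwu k)
        · exact Or.inl h1
        · exact Or.inr (hT k (by rw [h1]; exact hx))
      · have hmm := (hufu k).2
        rw [he, hmem3] at hmm
        rcases hmm with h1 | h1 | h1
        · exact absurd h1 (hwu k)
        · exact Or.inr (hT k ⟨j', Or.inl h1⟩)
        · exact Or.inr (hT k ⟨j', Or.inr h1⟩)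
    · refine two w hwinj (a i) T (fun k => ?_)
      obtain ⟨x, hx, he⟩ := S1 (fu k) (hfuH k) i hi (hufu k).1
      have hmm := (hufu k).2
      rw [he, hmem3] at hmm
      rcases hmm with h1 | h1 | h1
      · exact Or.inl h1
      · exact absurd h1 (hwu k)
      · exact Or.inr (hT k (by rw [h1]; exact hx))
  -- AA : hubs forming a left twin pair are impossible
  have AA : ∀ (w : Fin t → V) (fu fv : Fin t → Finset V) (i : Fin m), (i : ℕ) < t - 1 →
      (∀ k, w k ≠ a i) → (∀ k, w k ≠ b i) → (∀ k, fu k ∈ H) → (∀ k, fv k ∈ H) →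
      (∀ k, a i ∈ fu k ∧ w k ∈ fu k) → (∀ k, b i ∈ fv k ∧ w k ∈ fv k) →
      Function.Injective fu → (∀ k l, fu k ≠ fv l) → False := by
    intro w fu fv i hi hwa hwb hfuH hfvH hufu hvfv hfuinj hfufv
    have hfvk : ∀ k, fv k = {a i, b i, w k} := by
      intro k
      obtain ⟨x, hx, he⟩ := S1 (fv k) (hfvH k) i hi (hvfv k).1
      have hmm := (hvfv k).2
      rw [he, hmem3] at hmm
      rcases hmm with h1 | h1 | h1
      · exact absurd h1 (hwa k)
      · exact absurd h1 (hwb k)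
      · rw [he, h1]
    have key : ∀ k, ∃ j : Fin m', (j : ℕ) < t - 1 ∧ fu k = {a i, c j, d j} := by
      intro k
      rcases S2 (fu k) (hfuH k) i hi (hufu k).1 with ⟨x, hx, he⟩ | ⟨j, hj, he⟩
      · exfalso
        have hmm := (hufu k).2
        rw [he, hmem3] at hmm
        rcases hmm with h1 | h1 | h1
        · exact absurd h1 (hwa k)
        · exact absurd h1 (hwb k)
        · exact hfufv k k (by rw [he, hfvk k, h1])
      · exact ⟨j, hj, he⟩
    choose j hjlt hjeq using key
    refine pig j (fun k l hkl => hfuinj ?_) hjlt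
    rw [hjeq k, hjeq l, hkl]
  -- AC : hubs forming a right twin pair are impossible
  have AC : ∀ (w : Fin t → V) (fu fv : Fin t → Finset V) (j : Fin m'),
      (∀ k, w k ≠ c j) → (∀ k, w k ≠ d j) → Function.Injective w →
      (∀ k, fu k ∈ H) → (∀ k, fv k ∈ H) →
      (∀ k, c j ∈ fu k ∧ w k ∈ fu k) → (∀ k, d j ∈ fv k ∧ w k ∈ fv k) →
      Function.Injective fu → Function.Injective fv → (∀ k l, fu k ≠ fv l) → False := by
    intro w fu fv j hwc hwd hwinj hfuH hfvH hufu hvfv hfuinj hfvinj hfufv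
    have hleft : ∀ k, ∃ i : Fin m, w k = a i ∨ w k = b i := by
      intro k
      rcases hvert (fu k) (hfuH k) (w k) (hufu k).2 with h | h
      · exact h
      · exfalso
        obtain ⟨j', h'⟩ := S5 (fu k) (hfuH k) (c j) (w k) (hufu k).1 (hufu k).2
          (Ne.symm (hwc k)) ⟨j, Or.inl rfl⟩ h
        rcases h' with ⟨h1, h2⟩ | ⟨h1, h2⟩
        · cases hc h1; exact hwd k h2
        · exact absurd h1 (hcd j j')
    choose i hi using hleft
    have hismall : ∀ k, (i k : ℕ) < t - 1 := by
      intro k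
      by_contra hk
      obtain ⟨j1, _, he1⟩ := S3 (fu k) (hfuH k) (w k) (i k) (hi k) hk (hufu k).2
      obtain ⟨j2, _, he2⟩ := S3 (fv k) (hfvH k) (w k) (i k) (hi k) hk (hvfv k).2
      have h1 := (hufu k).1
      rw [he1, hmem3] at h1
      have hj1 : j1 = j := by
        rcases h1 with h1 | h1 | h1
        · exact hc h1.symm
        · exact absurd h1.symm (hdc j1 j)
        · rcases hi k with hw | hw
          · exact absurd (h1.trans hw) (hca j (i k))
          · exact absurd (h1.trans hw) (hcb j (i k))
      have h2 := (hvfv k).1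
      rw [he2, hmem3] at h2
      have hj2 : j2 = j := by
        rcases h2 with h2 | h2 | h2
        · exact absurd h2.symm (hcd j2 j)
        · exact hd h2.symm
        · rcases hi k with hw | hw
          · exact absurd (h2.trans hw) (hda j (i k))
          · exact absurd (h2.trans hw) (hdb j (i k))
      exact hfufv k k (by rw [he1, he2, hj1, hj2])
    have sub : ∀ k l : Fin t, ¬ k = l → i k = i l → w k = b (i k) → w l = a (i k) → False := by
      intro k l hkl hil hwk hwl
      obtain ⟨x1, hx1, he1⟩ := S1 (fu k) (hfuH k) (i k) (hismall k) (hwk ▸ (hufu k).2)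
      have hc1 := (hufu k).1
      rw [he1, hmem3] at hc1
      have he1' : fu k = {a (i k), b (i k), c j} := by
        rcases hc1 with h1 | h1 | h1
        · exact absurd h1.symm (hac (i k) j)
        · exact absurd h1.symm (hbc (i k) j)
        · rw [he1, ← h1]
      obtain ⟨x2, hx2, he2⟩ := S1 (fv k) (hfvH k) (i k) (hismall k) (hwk ▸ (hvfv k).2)
      have hd2 := (hvfv k).1
      rw [he2, hmem3] at hd2
      have he2' : fv k = {a (i k), b (i k), d j} := by
        rcases hd2 with h1 | h1 | h1
        · exact absurd h1.symm (had (i k) j)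
        · exact absurd h1.symm (hbd (i k) j)
        · rw [he2, ← h1]
      have hal : a (i k) ∈ fu l := hwl ▸ (hufu l).2
      have he3' : fu l = {a (i k), c j, d j} := by
        rcases S2 (fu l) (hfuH l) (i k) (hismall k) hal with ⟨x3, hx3, he3⟩ | ⟨j3, _, he3⟩
        · exfalso
          have hc3 := (hufu l).1
          rw [he3, hmem3] at hc3
          have heq : fu l = fu k := by
            rcases hc3 with h1 | h1 | h1
            · exact absurd h1.symm (hac (i k) j)
            · exact absurd h1.symm (hbc (i k) j)
            · rw [he3, ← h1, he1']
          exact hkl (hfuinj heq).symm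
        · have hc3 := (hufu l).1
          rw [he3, hmem3] at hc3
          rcases hc3 with h1 | h1 | h1
          · exact absurd h1.symm (hac (i k) j)
          · cases hc h1; rw [he3]
          · exact absurd h1.symm (hdc j3 j)
      rcases S2 (fv l) (hfvH l) (i k) (hismall k) (hwl ▸ (hvfv l).2) with
        ⟨x4, hx4, he4⟩ | ⟨j4, _, he4⟩
      · have hd4 := (hvfv l).1
        rw [he4, hmem3] at hd4
        have heq : fv l = fv k := by
          rcases hd4 with h1 | h1 | h1
          · exact absurd h1.symm (had (i k) j)
          · exact absurd h1.symm (hbd (i k) j)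
          · rw [he4, ← h1, he2']
        exact hkl (hfvinj heq).symm
      · have hd4 := (hvfv l).1
        rw [he4, hmem3] at hd4
        have heq : fv l = fu l := by
          rcases hd4 with h1 | h1 | h1
          · exact absurd h1.symm (had (i k) j)
          · exact absurd h1.symm (hcd j4 j)
          · cases hd h1; rw [he4, he3']
        exact hfufv l l heq.symm
    have hiinj : Function.Injective i := by
      intro k l hkl
      by_contra hne
      rcases hi k with hk1 | hk1 <;> rcases hi l with hl1 | hl1
      · rw [← hkl] at hl1
        exact hne (hwinj (hk1.trans hl1.symm))
      · exact sub l k (fun h => hne h.symm) hkl.symm hl1 (by rw [hk1, hkl])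
      · exact sub k l hne hkl hk1 (by rw [hl1, hkl])
      · rw [← hkl] at hl1
        exact hne (hwinj (hk1.trans hl1.symm))
    exact pig i hiinj hismall
  -- main case analysis
  rintro ⟨u, v, w, f₀, fu, fv, huv, hwinj, hwu, hwv, hf₀H, hfuH, hfvH, huf₀, hvf₀,
    hufu, hvfv, hfuinj, hfvinj, hfu₀, hfv₀, hfufv⟩
  rcases hvert f₀ hf₀H u huf₀ with ⟨iu, hiu⟩ | ⟨ju, hju⟩
  · by_cases hiusm : (iu : ℕ) < t - 1
    · rcases hvert f₀ hf₀H v hvf₀ with ⟨iv, hiv⟩ | ⟨jv, hjv⟩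
      · obtain ⟨i₀, hi₀, hcase⟩ := S6 f₀ hf₀H u v huf₀ hvf₀ huv ⟨iu, hiu⟩ ⟨iv, hiv⟩
        rcases hcase with ⟨rfl, rfl⟩ | ⟨rfl, rfl⟩
        · exact AA w fu fv i₀ hi₀ hwu hwv hfuH hfvH hufu hvfv hfuinj hfufv
        · exact AA w fv fu i₀ hi₀ hwv hwu hfvH hfuH hvfv hufu hfvinj
            (fun k l h => hfufv l k h.symm)
      · exact AM u v w fu fv iu hiu hiusm ⟨jv, hjv⟩ hwinj hwu hwv hfuH hfvH hufu hvfv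
    · exact AO u fu iu hiu hiusm hfuH (fun k => (hufu k).1) hfuinj
  · rcases hvert f₀ hf₀H v hvf₀ with ⟨iv, hiv⟩ | ⟨jv, hjv⟩
    · by_cases hivsm : (iv : ℕ) < t - 1
      · exact AM v u w fv fu iv hiv hivsm ⟨ju, hju⟩ hwinj hwv hwu hfvH hfuH hvfv hufu
      · exact AO v fv iv hiv hivsm hfvH (fun k => (hvfv k).1) hfvinj
    · obtain ⟨j₀, hcase⟩ := S5 f₀ hf₀H u v huf₀ hvf₀ huv ⟨ju, hju⟩ ⟨jv, hjv⟩
      rcases hcase with ⟨rfl, rfl⟩ | ⟨rfl, rfl⟩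
      · exact AC w fu fv j₀ hwu hwv hwinj hfuH hfvH hufu hvfv hfuinj hfvinj hfufv
      · exact AC w fv fu j₀ hwv hwu hwinj hfvH hfuH hvfv hufu hfvinj hfuinj
          (fun k l h => hfufv l k h.symm)
end

section
/- Counting decomposition for Berge-F-free hypergraphs: let F be a graph with p = |E(F)| edges and let H be an r-uniform Berge-F-free hypergraph with shadow graph G. Partition H into: H_1 (hyperedges containing a triangle with at least two heavy edges, one of which is p-light), H_2 (hyperedges all of whose pairs are p-heavy), and H_3 (the rest). Then |H| ≤ (p−1)·N(K_3, G_1) + N(K_r, G_2) + |E(G_3)| / (k(r−k)), where k = min{r−1, |V(F)|−1}, G_1 is the graph of edges of the chosen triangles of hyperedges in H_1, G_2 is the shadow graph of H_2, and G_3 is the graph of light edges contained in hyperedges of H_3. -/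
attribute [local instance] Classical.propDecidable

lemma two_mul_le_sq_add_sq (k j : ℕ) : 2*(k*j) ≤ k*k + j*j := by
  rcases le_total k j with h | h
  · obtain ⟨d, rfl⟩ : ∃ d, j = k + d := ⟨j - k, by omega⟩
    nlinarith
  · obtain ⟨d, rfl⟩ : ∃ d, k = j + d := ⟨k - j, by omega⟩
    nlinarith

lemma aux_arith (a k r : ℕ) (ha : 1 ≤ a) (hak : a ≤ k) (hkr : k < r) :
    a*a + (r-a) * min a (r-a) + 2*(k*(r-k)) ≤ r*r := by
  obtain ⟨b, hb⟩ : ∃ b, r = a + b := ⟨r - a, by omega⟩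
  obtain ⟨j, hj⟩ : ∃ j, r = k + j := ⟨r - k, by omega⟩
  have h1 : r - a = b := by omega
  have h2 : r - k = j := by omega
  rw [h1, h2]
  have hjb : j ≤ b := by omega
  have hj1 : 1 ≤ j := by omega
  have hkj : k + j = a + b := by omega
  rcases le_total a b with hab | hba
  · rw [min_eq_left hab]
    have h3 : 4*(k*j) ≤ (k+j)*(k+j) := by
      have := two_mul_le_sq_add_sq k j
      nlinarith
    have h4 : (k+j)*(k+j) ≤ 2*b*(k+j) := by nlinarith
    nlinarith
  · rw [min_eq_right hba]
    obtain ⟨s, hs⟩ : ∃ s, k = a + s := ⟨k - a, by omega⟩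
    have hbjs : b = j + s := by omega
    have hja : j ≤ a := by omega
    have : s*j ≤ s*a := Nat.mul_le_mul_left s hja
    nlinarith

/-- Counting decomposition for Berge-`F`-free hypergraphs: with `p = |E(F)|` and
`k = min{r-1, |V(F)|-1}`, partition the `r`-uniform Berge-`F`-free hypergraph `H`
into `H₁` (hyperedges containing a triangle with at least two heavy pairs and a
`p`-light pair), `H₂` (hyperedges all of whose pairs are `p`-heavy) and `H₃` (the
rest).  Then `|H| ≤ (p-1)·N(K₃,G₁) + N(K_r,G₂) + |E(G₃)|/(k(r-k))`, where `G₁` is the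
graph of edges of chosen triangles of hyperedges of `H₁`, `G₂` is the shadow graph of
`H₂` and `G₃` is the graph of light edges contained in hyperedges of `H₃`. -/
theorem berge_counting_decomposition {V W : Type*} [Fintype V] [DecidableEq V]
    [Fintype W]
    (r : ℕ) (hr : 3 ≤ r)
    (H : Finset (Finset V)) (huniform : ∀ h ∈ H, h.card = r)
    (F : SimpleGraph W) [DecidableRel F.Adj]
    (p : ℕ) (hp : p = F.edgeFinset.card) (hp2 : 2 ≤ p)
    (k : ℕ) (hk : k = min (r - 1) (Fintype.card W - 1))
    (hfree : ¬ HasBergeCopy H F)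
    (heavy plight : V → V → Prop)
    (hheavy : ∀ u v, heavy u v ↔ 2 ≤ (H.filter (fun g => u ∈ g ∧ v ∈ g)).card)
    (hplight : ∀ u v, plight u v ↔ (H.filter (fun g => u ∈ g ∧ v ∈ g)).card < p)
    (H₁ H₂ H₃ : Finset (Finset V))
    (hH₁ : H₁ = H.filter (fun h => ∃ x y z : V, x ∈ h ∧ y ∈ h ∧ z ∈ h ∧
      x ≠ y ∧ y ≠ z ∧ x ≠ z ∧
      ((heavy x y ∧ heavy y z) ∨ (heavy x y ∧ heavy x z) ∨ (heavy y z ∧ heavy x z)) ∧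
      (plight x y ∨ plight y z ∨ plight x z)))
    (hH₂ : H₂ = H.filter (fun h => ∀ u ∈ h, ∀ v ∈ h, u ≠ v →
      p ≤ (H.filter (fun g => u ∈ g ∧ v ∈ g)).card))
    (hH₃ : H₃ = H \ (H₁ ∪ H₂))
    (T : Finset V → Finset V)
    (hT : ∀ h ∈ H₁, T h ⊆ h ∧ ∃ x y z : V, T h = {x, y, z} ∧
      x ≠ y ∧ y ≠ z ∧ x ≠ z ∧
      ((heavy x y ∧ heavy y z) ∨ (heavy x y ∧ heavy x z) ∨ (heavy y z ∧ heavy x z)) ∧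
      (plight x y ∨ plight y z ∨ plight x z))
    (G₁ G₂ G₃ : SimpleGraph V)
    (hG₁ : ∀ x y, G₁.Adj x y ↔ x ≠ y ∧ ∃ h ∈ H₁, x ∈ T h ∧ y ∈ T h)
    (hG₂ : ∀ x y, G₂.Adj x y ↔ x ≠ y ∧ ∃ h ∈ H₂, x ∈ h ∧ y ∈ h)
    (hG₃ : ∀ x y, G₃.Adj x y ↔ x ≠ y ∧ (∃ h ∈ H₃, x ∈ h ∧ y ∈ h) ∧ ¬ heavy x y) :
    (H.card : ℝ) ≤ ((p : ℝ) - 1) * (G₁.cliqueFinset 3).card +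
      (G₂.cliqueFinset r).card + (G₃.edgeFinset.card : ℝ) / ((k * (r - k) : ℕ) : ℝ) := by
  classical
  -- basic cardinality facts
  have hW3 : 3 ≤ Fintype.card W := by
    by_contra hW
    push_neg at hW
    have h1 : F.edgeFinset.card ≤ (Fintype.card W).choose 2 :=
      SimpleGraph.card_edgeFinset_le_card_choose_two
    have h2 : (Fintype.card W).choose 2 ≤ (2).choose 2 :=
      Nat.choose_le_choose 2 (by omega)
    simp [Nat.choose] at h2
    omega
  have hk2 : 2 ≤ k := by
    rw [hk]; omega
  have hkr : k < r := by
    rw [hk]; omega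
  have hH₁sub : H₁ ⊆ H := by rw [hH₁]; exact Finset.filter_subset _ _
  have hH₂sub : H₂ ⊆ H := by rw [hH₂]; exact Finset.filter_subset _ _
  have hH₃sub : H₃ ⊆ H := by rw [hH₃]; exact Finset.sdiff_subset
  have hlight_plight : ∀ u v : V, ¬ heavy u v → plight u v := by
    intro u v h
    rw [hheavy] at h
    rw [hplight]
    omega
  have hsym : ∀ u v : V, heavy u v → heavy v u := by
    intro u v h
    rw [hheavy] at h ⊢
    have : (H.filter fun g => u ∈ g ∧ v ∈ g) = (H.filter fun g => v ∈ g ∧ u ∈ g) := by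
      apply Finset.filter_congr
      intro g _
      constructor <;> exact fun ⟨a, b⟩ => ⟨b, a⟩
    rwa [this] at h
  -- Step A: |H₁| ≤ (p-1) * N(K₃, G₁)
  have hA : H₁.card ≤ (p - 1) * (G₁.cliqueFinset 3).card := by
    apply Finset.card_le_mul_card_image_of_maps_to (f := T) (t := G₁.cliqueFinset 3)
    · -- maps to triangles
      intro h hh
      obtain ⟨hTsub, x, y, z, hTeq, hxy, hyz, hxz, hheavies, hplights⟩ := hT h hh
      rw [SimpleGraph.mem_cliqueFinset_iff, SimpleGraph.isNClique_iff]
      constructor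
      · intro a ha b hb hab
        rw [hG₁]
        exact ⟨hab, h, hh, ha, hb⟩
      · rw [hTeq]
        rw [Finset.card_insert_of_notMem (by simp [hxy, hxz]),
          Finset.card_insert_of_notMem (by simp [hyz])]
        simp
    · -- fibers have size ≤ p - 1
      intro t ht
      rcases Finset.eq_empty_or_nonempty (H₁.filter (fun h => T h = t)) with he | ⟨h₀, hh₀⟩
      · rw [he]; simp
      · rw [Finset.mem_filter] at hh₀
        obtain ⟨hh₀₁, hTh₀⟩ := hh₀
        obtain ⟨hTsub, x, y, z, hTeq, hxy, hyz, hxz, hheavies, hplights⟩ := hT h₀ hh₀₁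
        -- pick the p-light pair (u, v) inside t
        obtain ⟨u, v, hu, hv, hpluv⟩ : ∃ u v, u ∈ T h₀ ∧ v ∈ T h₀ ∧ plight u v := by
          rcases hplights with h' | h' | h'
          · exact ⟨x, y, by rw [hTeq]; simp, by rw [hTeq]; simp, h'⟩
          · exact ⟨y, z, by rw [hTeq]; simp, by rw [hTeq]; simp, h'⟩
          · exact ⟨x, z, by rw [hTeq]; simp, by rw [hTeq]; simp, h'⟩
        have hsub : H₁.filter (fun h => T h = t) ⊆ H.filter (fun g => u ∈ g ∧ v ∈ g) := by
          intro h' hh'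
          rw [Finset.mem_filter] at hh' ⊢
          obtain ⟨hh'₁, hTh'⟩ := hh'
          obtain ⟨hTsub', _⟩ := hT h' hh'₁
          refine ⟨hH₁sub hh'₁, ?_, ?_⟩
          · exact hTsub' (by rw [hTh', ← hTh₀]; exact hu)
          · exact hTsub' (by rw [hTh', ← hTh₀]; exact hv)
        have := Finset.card_le_card hsub
        rw [hplight] at hpluv
        omega
  -- Step B: |H₂| ≤ N(K_r, G₂)
  have hB : H₂.card ≤ (G₂.cliqueFinset r).card := by
    apply Finset.card_le_card
    intro h hh
    rw [SimpleGraph.mem_cliqueFinset_iff, SimpleGraph.isNClique_iff]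
    refine ⟨?_, huniform h (hH₂sub hh)⟩
    intro a ha b hb hab
    rw [hG₂]
    exact ⟨hab, h, hh, ha, hb⟩
  -- Step C: k(r-k) * |H₃| ≤ |E(G₃)|
  have hC : H₃.card * (k * (r - k)) ≤ G₃.edgeFinset.card := by
    set Eh : Finset V → Finset (Sym2 V) :=
      fun h => G₃.edgeFinset.filter (fun e => ∀ x ∈ e, x ∈ h) with hEh
    have key : ∀ h ∈ H₃, k * (r - k) ≤ (Eh h).card := by
      intro h hh₃
      have hmem : h ∈ H := hH₃sub hh₃
      have hcard : h.card = r := huniform h hmem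
      have hn12 : h ∉ H₁ ∧ h ∉ H₂ := by
        rw [hH₃, Finset.mem_sdiff, Finset.mem_union] at hh₃
        tauto
      obtain ⟨hn1, hn2⟩ := hn12
      have hno : ∀ x y z : V, x ∈ h → y ∈ h → z ∈ h → x ≠ y → y ≠ z → x ≠ z →
          ((heavy x y ∧ heavy y z) ∨ (heavy x y ∧ heavy x z) ∨ (heavy y z ∧ heavy x z)) →
          ¬(plight x y ∨ plight y z ∨ plight x z) := by
        intro x y z hx hy hz hxy hyz hxz hhv hpl
        apply hn1
        rw [hH₁, Finset.mem_filter]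
        exact ⟨hmem, x, y, z, hx, hy, hz, hxy, hyz, hxz, hhv, hpl⟩
      have htrans : ∀ x y z : V, x ∈ h → y ∈ h → z ∈ h → x ≠ y → y ≠ z → x ≠ z →
          heavy x y → heavy y z → heavy x z := by
        intro x y z hx hy hz hxy hyz hxz h1 h2
        by_contra hc
        exact hno x y z hx hy hz hxy hyz hxz (Or.inl ⟨h1, h2⟩)
          (Or.inr (Or.inr (hlight_plight _ _ hc)))
      set C : V → Finset V := fun x => h.filter (fun y => y = x ∨ heavy x y) with hCdef
      have hCmem : ∀ x y : V, y ∈ C x ↔ y ∈ h ∧ (y = x ∨ heavy x y) := by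
        intro x y; rw [hCdef]; exact Finset.mem_filter
      have hCsub : ∀ x, C x ⊆ h := fun x => Finset.filter_subset _ _
      have hxC : ∀ x ∈ h, x ∈ C x := fun x hx => (hCmem x x).mpr ⟨hx, Or.inl rfl⟩
      have hCclique : ∀ x ∈ h, ∀ a ∈ C x, ∀ b ∈ C x, a ≠ b → heavy a b := by
        intro x hx a ha b hb hab
        rw [hCmem] at ha hb
        by_cases hax : a = x
        · rcases hb.2 with h' | h'
          · exact absurd (h'.trans hax.symm) (Ne.symm hab)
          · rw [hax]; exact h'
        · rcases ha.2 with h' | h'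
          · exact absurd h' hax
          · by_cases hbx : b = x
            · rw [hbx]; exact hsym _ _ h'
            · rcases hb.2 with h'' | h''
              · exact absurd h'' hbx
              · exact htrans a x b ha.1 hx hb.1 hax (Ne.symm hbx) hab (hsym _ _ h') h''
      have hCp : ∀ x ∈ h, 3 ≤ (C x).card → ∀ a ∈ C x, ∀ b ∈ C x, a ≠ b →
          p ≤ (H.filter (fun g => a ∈ g ∧ b ∈ g)).card := by
        intro x hx h3 a ha b hb hab
        by_contra hc
        push_neg at hc
        have hpl : plight a b := (hplight a b).mpr hc
        have hpos : 0 < (((C x).erase a).erase b).card := by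
          have e1 : (C x).card - 1 ≤ ((C x).erase a).card := Finset.pred_card_le_card_erase
          have e2 : ((C x).erase a).card - 1 ≤ (((C x).erase a).erase b).card :=
            Finset.pred_card_le_card_erase
          omega
        obtain ⟨c, hc'⟩ := Finset.card_pos.mp hpos
        have hcb : c ≠ b := Finset.ne_of_mem_erase hc'
        have hca : c ≠ a := Finset.ne_of_mem_erase (Finset.mem_of_mem_erase hc')
        have hcC : c ∈ C x := Finset.mem_of_mem_erase (Finset.mem_of_mem_erase hc')
        exact hno a b c (hCsub x ha) (hCsub x hb) (hCsub x hcC) hab (Ne.symm hcb)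
          (Ne.symm hca)
          (Or.inl ⟨hCclique x hx a ha b hb hab, hCclique x hx b hb c hcC (Ne.symm hcb)⟩)
          (Or.inl hpl)
      have hCk : ∀ x ∈ h, (C x).card ≤ k := by
        intro x hx
        by_contra hc
        push_neg at hc
        have h3 : 3 ≤ (C x).card := by omega
        have hpheavy := hCp x hx h3
        rcases le_or_gt (Fintype.card W) r with hWr | hrW
        · -- |V(F)| ≤ r : embed a Berge copy of F into the p-heavy clique C x
          have hcardle : Fintype.card W ≤ (C x).card := by
            rw [hk] at hc; omega
          have hcardle' : Fintype.card W ≤ Fintype.card {y // y ∈ C x} := by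
            rwa [Fintype.card_coe]
          obtain ⟨emb⟩ := Function.Embedding.nonempty_of_card_le hcardle'
          set φ : W → V := fun w => (emb w : V) with hφ
          have hφinj : Function.Injective φ := fun w w' hww =>
            emb.injective (Subtype.ext hww)
          have hφC : ∀ w, φ w ∈ C x := fun w => (emb w).2
          set t : {e : Sym2 W // e ∈ F.edgeFinset} → Finset (Finset V) :=
            fun e => H.filter (fun g => ∀ w ∈ e.val, φ w ∈ g) with htdef
          have htp : ∀ e, p ≤ (t e).card := by
            rintro ⟨e', he'⟩
            induction e' using Sym2.ind with
            | _ a b =>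
              have hadj : F.Adj a b := by
                rwa [SimpleGraph.mem_edgeFinset, SimpleGraph.mem_edgeSet] at he'
              have hab : a ≠ b := hadj.ne
              have heq : t ⟨s(a, b), he'⟩ = H.filter (fun g => φ a ∈ g ∧ φ b ∈ g) := by
                rw [htdef]
                apply Finset.filter_congr
                intro g _
                constructor
                · intro hf
                  exact ⟨hf a (by simp), hf b (by simp)⟩
                · rintro ⟨h1, h2⟩ w hw
                  rcases Sym2.mem_iff.mp hw with rfl | rfl
                  exacts [h1, h2]
              rw [heq]
              exact hpheavy (φ a) (hφC a) (φ b) (hφC b) (fun hv => hab (hφinj hv))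
          have hall : ∀ s : Finset {e : Sym2 W // e ∈ F.edgeFinset},
              s.card ≤ (s.biUnion t).card := by
            intro s
            rcases Finset.eq_empty_or_nonempty s with rfl | ⟨e, he⟩
            · simp
            · calc s.card ≤ Fintype.card {e : Sym2 W // e ∈ F.edgeFinset} :=
                    Finset.card_le_univ s
                _ = p := by rw [Fintype.card_coe, hp]
                _ ≤ (t e).card := htp e
                _ ≤ (s.biUnion t).card :=
                    Finset.card_le_card (Finset.subset_biUnion_of_mem t he)
          obtain ⟨f, hfinj, hft⟩ :=
            (Finset.all_card_le_biUnion_card_iff_exists_injective t).mp hall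
          apply hfree
          refine ⟨φ, fun e => if he : e ∈ F.edgeFinset then f ⟨e, he⟩ else ∅,
            hφinj, ?_, ?_⟩
          · intro e₁ he₁ e₂ he₂ heq
            rw [Finset.mem_coe] at he₁ he₂
            simp only [dif_pos he₁, dif_pos he₂] at heq
            exact Subtype.mk_eq_mk.mp (hfinj heq)
          · intro e he
            simp only [dif_pos he]
            have hmem' := hft ⟨e, he⟩
            rw [htdef, Finset.mem_filter] at hmem'
            exact ⟨hmem'.1, hmem'.2⟩
        · -- r < |V(F)| : all pairs of h are p-heavy, so h ∈ H₂
          have hkr' : k = r - 1 := by rw [hk]; omega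
          have hCx : C x = h :=
            Finset.eq_of_subset_of_card_le (hCsub x) (by omega)
          apply hn2
          rw [hH₂, Finset.mem_filter]
          refine ⟨hmem, fun u hu v hv huv => hpheavy u ?_ v ?_ huv⟩ <;>
            rw [hCx] <;> assumption
      -- components
      have hmemsym : ∀ x ∈ h, ∀ y, y ∈ C x → x ∈ C y := by
        intro x hx y hy
        rw [hCmem] at hy ⊢
        rcases hy.2 with h' | h'
        · rw [h']; exact ⟨hx, Or.inl rfl⟩
        · exact ⟨hx, Or.inr (hsym _ _ h')⟩
      have hCsubC : ∀ x ∈ h, ∀ y, y ∈ C x → C y ⊆ C x := by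
        intro x hx y hy z hz
        rw [hCmem] at hy hz ⊢
        refine ⟨hz.1, ?_⟩
        by_cases hzx : z = x
        · exact Or.inl hzx
        · rcases hy.2 with h' | hxy'
          · rw [h'] at hz; exact hz.2
          · rcases hz.2 with h'' | hyz'
            · rw [h'']; exact Or.inr hxy'
            · by_cases hxy0 : x = y
              · rw [hxy0]; exact Or.inr hyz'
              · by_cases hyz0 : y = z
                · rw [← hyz0]; exact Or.inr hxy'
                · exact Or.inr (htrans x y z hx hy.1 hz.1 hxy0 hyz0 (Ne.symm hzx) hxy' hyz')
      have hCC : ∀ x ∈ h, ∀ y ∈ C x, C y = C x := by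
        intro x hx y hy
        exact Finset.Subset.antisymm (hCsubC x hx y hy)
          (hCsubC y (hCsub x hy) x (hmemsym x hx y hy))
      -- maximal component
      have hne : h.Nonempty := Finset.card_pos.mp (by omega)
      obtain ⟨x₀, hx₀, hmax⟩ := Finset.exists_max_image h (fun x => (C x).card) hne
      set A := C x₀ with hA
      set a := A.card with ha
      have ha1 : 1 ≤ a := Finset.card_pos.mpr ⟨x₀, hxC x₀ hx₀⟩
      have hak : a ≤ k := hCk x₀ hx₀
      have hAsub : A ⊆ h := hCsub x₀
      have hsumC : ∑ x ∈ h, (C x).card ≤ (r - a) * min a (r - a) + a * a := by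
        rw [← Finset.sum_sdiff hAsub]
        have e1 : ∑ x ∈ A, (C x).card = a * a := by
          rw [Finset.sum_congr rfl (fun x hx => by rw [hCC x₀ hx₀ x hx])]
          rw [Finset.sum_const, smul_eq_mul, ← ha]
        have e2 : ∑ x ∈ h \ A, (C x).card ≤ (r - a) * min a (r - a) := by
          have hb : ∀ x ∈ h \ A, (C x).card ≤ min a (r - a) := by
            intro x hx
            rw [Finset.mem_sdiff] at hx
            refine le_min (hmax x hx.1) ?_
            have hsub2 : C x ⊆ h \ A := by
              intro z hz
              rw [Finset.mem_sdiff]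
              refine ⟨hCsub x hz, fun hzA => ?_⟩
              have hxCz : x ∈ C z := hmemsym x hx.1 z hz
              rw [hCC x₀ hx₀ z hzA] at hxCz
              exact hx.2 hxCz
            calc (C x).card ≤ (h \ A).card := Finset.card_le_card hsub2
              _ = r - a := by rw [Finset.card_sdiff_of_subset hAsub, hcard]
          calc ∑ x ∈ h \ A, (C x).card ≤ ∑ _x ∈ h \ A, min a (r - a) :=
                Finset.sum_le_sum hb
            _ = (h \ A).card * min a (r - a) := by rw [Finset.sum_const, smul_eq_mul]
            _ = (r - a) * min a (r - a) := by rw [Finset.card_sdiff_of_subset hAsub, hcard]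
        exact Nat.add_le_add e2 e1.le
      -- light-neighbour sets
      set D : V → Finset V := fun x => h.filter (fun y => ¬(y = x ∨ heavy x y)) with hDdef
      have hCD : ∀ x ∈ h, (C x).card + (D x).card = r := by
        intro x hx
        rw [hCdef, hDdef, ← hcard]
        exact Finset.card_filter_add_card_filter_not _
      have hDsum : 2 * (k * (r - k)) ≤ ∑ x ∈ h, (D x).card := by
        have t1 : ∑ x ∈ h, ((C x).card + (D x).card) = r * r := by
          rw [Finset.sum_congr rfl hCD, Finset.sum_const, smul_eq_mul, hcard]
        have t3 : ∑ x ∈ h, ((C x).card + (D x).card)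
            = ∑ x ∈ h, (C x).card + ∑ x ∈ h, (D x).card := Finset.sum_add_distrib
        have t2 := aux_arith a k r ha1 hak hkr
        have t4 := Nat.sub_le r a
        linarith
      -- inject (ordered) light pairs into edges of G₃ within h
      have hEcard : ∑ x ∈ h, (D x).card ≤ 2 * (Eh h).card := by
        rw [← Finset.card_sigma]
        apply Finset.card_le_mul_card_image_of_maps_to
          (f := fun q : (_ : V) × V => s(q.1, q.2)) (t := Eh h)
        · intro q hq
          rw [Finset.mem_sigma] at hq
          obtain ⟨hq1, hq2⟩ := hq
          rw [hDdef, Finset.mem_filter] at hq2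
          obtain ⟨hq2h, hq2p⟩ := hq2
          push_neg at hq2p
          rw [hEh, Finset.mem_filter]
          constructor
          · rw [SimpleGraph.mem_edgeFinset, SimpleGraph.mem_edgeSet, hG₃]
            exact ⟨Ne.symm hq2p.1, ⟨h, hh₃, hq1, hq2h⟩, hq2p.2⟩
          · intro z hz
            rcases Sym2.mem_iff.mp hz with rfl | rfl
            exacts [hq1, hq2h]
        · intro e he
          induction e using Sym2.ind with
          | _ u v =>
            have hfil : ((h.sigma (fun x => D x)).filter
                (fun q => s(q.1, q.2) = s(u, v))) ⊆
                ({⟨u, v⟩, ⟨v, u⟩} : Finset ((_ : V) × V)) := by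
              intro q hq
              obtain ⟨x, y⟩ := q
              rw [Finset.mem_filter] at hq
              rcases Sym2.eq_iff.mp hq.2 with ⟨h1, h2⟩ | ⟨h1, h2⟩
              · have h1' : x = u := h1
                have h2' : y = v := h2
                rw [h1', h2']; exact Finset.mem_insert_self _ _
              · have h1' : x = v := h1
                have h2' : y = u := h2
                rw [h1', h2']
                exact Finset.mem_insert_of_mem (Finset.mem_singleton_self _)
            calc ((h.sigma (fun x => D x)).filter (fun q => s(q.1, q.2) = s(u, v))).card
                ≤ ({⟨u, v⟩, ⟨v, u⟩} : Finset ((_ : V) × V)).card :=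
                  Finset.card_le_card hfil
              _ ≤ 2 := by
                  refine le_trans (Finset.card_insert_le _ _) ?_
                  simp
      -- conclude
      have := hDsum
      have := hEcard
      linarith
    have hdisj : ∀ h ∈ H₃, ∀ h' ∈ H₃, h ≠ h' → Disjoint (Eh h) (Eh h') := by
      intro h hh h' hh' hne
      rw [Finset.disjoint_left]
      intro e he he'
      rw [hEh, Finset.mem_filter] at he he'
      obtain ⟨heE, hein⟩ := he
      obtain ⟨_, hein'⟩ := he'
      induction e using Sym2.ind with
      | _ a b =>
        have hadj : G₃.Adj a b := by
          rw [← SimpleGraph.mem_edgeSet, ← SimpleGraph.mem_edgeFinset]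
          exact heE
        rw [hG₃] at hadj
        obtain ⟨hab, _, hnh⟩ := hadj
        rw [hheavy] at hnh
        have h2le : 2 ≤ (H.filter (fun g => a ∈ g ∧ b ∈ g)).card := by
          refine Finset.one_lt_card.mpr ⟨h, ?_, h', ?_, hne⟩
          · rw [Finset.mem_filter]
            exact ⟨hH₃sub hh, hein a (by simp), hein b (by simp)⟩
          · rw [Finset.mem_filter]
            exact ⟨hH₃sub hh', hein' a (by simp), hein' b (by simp)⟩
        exact hnh h2le
    calc H₃.card * (k * (r - k)) = ∑ _h ∈ H₃, (k * (r - k)) := by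
          rw [Finset.sum_const, smul_eq_mul]
      _ ≤ ∑ h ∈ H₃, (Eh h).card := Finset.sum_le_sum key
      _ = (H₃.biUnion Eh).card := (Finset.card_biUnion hdisj).symm
      _ ≤ G₃.edgeFinset.card := by
          apply Finset.card_le_card
          intro e he
          rw [Finset.mem_biUnion] at he
          obtain ⟨h, _, he⟩ := he
          rw [hEh, Finset.mem_filter] at he
          exact he.1
  -- Final assembly
  have hsplit : H.card ≤ H₁.card + H₂.card + H₃.card := by
    have h1 : H₃.card + (H₁ ∪ H₂).card = (H ∪ (H₁ ∪ H₂)).card := by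
      rw [hH₃]
      exact Finset.card_sdiff_add_card H (H₁ ∪ H₂)
    have h2 : H ∪ (H₁ ∪ H₂) = H := by
      apply Finset.union_eq_left.mpr
      exact Finset.union_subset hH₁sub hH₂sub
    have h3 := Finset.card_union_le H₁ H₂
    rw [h2] at h1
    omega
  have hKpos : (0 : ℝ) < ((k * (r - k) : ℕ) : ℝ) := by
    have : 0 < k * (r - k) := Nat.mul_pos (by omega) (by omega)
    exact_mod_cast this
  have hc3 : (H₃.card : ℝ) ≤ (G₃.edgeFinset.card : ℝ) / ((k * (r - k) : ℕ) : ℝ) := by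
    rw [le_div_iff₀ hKpos]
    exact_mod_cast hC
  have hc1 : (H₁.card : ℝ) ≤ ((p : ℝ) - 1) * (G₁.cliqueFinset 3).card := by
    have : ((p - 1 : ℕ) : ℝ) = (p : ℝ) - 1 := by
      have : 1 ≤ p := by omega
      push_cast [this]
      ring
    calc (H₁.card : ℝ) ≤ ((p - 1 : ℕ) : ℝ) * ((G₁.cliqueFinset 3).card : ℝ) := by
          exact_mod_cast hA
      _ = ((p : ℝ) - 1) * (G₁.cliqueFinset 3).card := by rw [this]
  have hc2 : (H₂.card : ℝ) ≤ ((G₂.cliqueFinset r).card : ℝ) := by exact_mod_cast hB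
  have hsplit' : (H.card : ℝ) ≤ (H₁.card : ℝ) + H₂.card + H₃.card := by exact_mod_cast hsplit
  linarith
end

section
/- If H is a 3-uniform hypergraph and u, v, w are distinct vertices such that at least two of the pairs uv, vw, uw are heavy (each contained in ≥ 2 hyperedges of H) and all three pairs are contained in at least one hyperedge, and at least one pair is 3-heavy OR one pair is light while the other two are heavy, then uvw is the core of a Berge triangle: there exist three pairwise distinct hyperedges h_1, h_2, h_3 with {u,v} ⊆ h_1, {v,w} ⊆ h_2, {u,w} ⊆ h_3. -/
attribute [local instance] Classical.propDecidable

private lemma triple_eq' {V : Type*} {h : Finset V} (hc : h.card = 3) {u v w : V}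
    (huv : u ≠ v) (hvw : v ≠ w) (huw : u ≠ w)
    (hu : u ∈ h) (hv : v ∈ h) (hw : w ∈ h) : h = ({u, v, w} : Finset V) := by
  classical
  have hsub : ({u, v, w} : Finset V) ⊆ h := by
    intro x hx
    simp only [Finset.mem_insert, Finset.mem_singleton] at hx
    rcases hx with rfl | rfl | rfl <;> assumption
  have hcard : ({u, v, w} : Finset V).card = 3 := by
    rw [Finset.card_insert_of_notMem (by simp [huv, huw]),
      Finset.card_insert_of_notMem (by simp [hvw]), Finset.card_singleton]
  exact (Finset.eq_of_subset_of_card_le hsub (by omega)).symm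

private lemma pick_two' {α : Type*} {s : Finset α} (hs : 2 ≤ s.card) (a : α) :
    ∃ b ∈ s, b ≠ a :=
  Finset.exists_mem_ne (by omega) a

private lemma pick_three' {α : Type*} [DecidableEq α] {s : Finset α} (hs : 3 ≤ s.card)
    (a b : α) : ∃ c ∈ s, c ≠ a ∧ c ≠ b := by
  have h1 : 1 < (s.erase a).card := by
    have := Finset.pred_card_le_card_erase (s := s) (a := a)
    omega
  obtain ⟨c, hc, hcb⟩ := Finset.exists_mem_ne h1 b
  exact ⟨c, Finset.mem_of_mem_erase hc, Finset.ne_of_mem_erase hc, hcb⟩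

private lemma pick_avoid' {α : Type*} {s : Finset α} {a b t : α} (hs : 2 ≤ s.card)
    (hab : a ≠ b) (ha : a ∈ s → a = t) (hb : b ∈ s → b = t) :
    ∃ c ∈ s, c ≠ a ∧ c ≠ b := by
  by_cases hma : a ∈ s
  · obtain ⟨c, hc, hca⟩ := pick_two' hs a
    refine ⟨c, hc, hca, ?_⟩
    rintro rfl
    exact hab ((ha hma).trans (hb hc).symm)
  · obtain ⟨c, hc, hcb⟩ := pick_two' hs b
    exact ⟨c, hc, fun h => hma (h ▸ hc), hcb⟩

/-- Let `H` be a 3-uniform hypergraph and `u, v, w` distinct vertices whose three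
pairs are each contained in at least one hyperedge.  If either one pair is light
(contained in exactly one hyperedge) while the other two are heavy (contained in at
least two), or all three pairs are heavy and at least one is 3-heavy, then `uvw` is
the core of a Berge triangle: there are pairwise distinct hyperedges `h₁, h₂, h₃ ∈ H`
with `{u,v} ⊆ h₁`, `{v,w} ⊆ h₂`, `{u,w} ⊆ h₃`. -/
theorem core_of_berge_triangle {V : Type*} (H : Finset (Finset V))
    (huniform : ∀ h ∈ H, h.card = 3)
    (u v w : V) (huv : u ≠ v) (hvw : v ≠ w) (huw : u ≠ w)
    (cuv cvw cuw : ℕ)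
    (hcuv : cuv = (H.filter (fun h => u ∈ h ∧ v ∈ h)).card)
    (hcvw : cvw = (H.filter (fun h => v ∈ h ∧ w ∈ h)).card)
    (hcuw : cuw = (H.filter (fun h => u ∈ h ∧ w ∈ h)).card)
    (hpos : 1 ≤ cuv ∧ 1 ≤ cvw ∧ 1 ≤ cuw)
    (hcase :
      (2 ≤ cuv ∧ 2 ≤ cvw ∧ 2 ≤ cuw ∧ (3 ≤ cuv ∨ 3 ≤ cvw ∨ 3 ≤ cuw)) ∨
      (cuv = 1 ∧ 2 ≤ cvw ∧ 2 ≤ cuw) ∨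
      (cvw = 1 ∧ 2 ≤ cuv ∧ 2 ≤ cuw) ∨
      (cuw = 1 ∧ 2 ≤ cuv ∧ 2 ≤ cvw)) :
    ∃ (h₁ h₂ h₃ : Finset V), h₁ ∈ H ∧ h₂ ∈ H ∧ h₃ ∈ H ∧
      h₁ ≠ h₂ ∧ h₂ ≠ h₃ ∧ h₁ ≠ h₃ ∧
      u ∈ h₁ ∧ v ∈ h₁ ∧ v ∈ h₂ ∧ w ∈ h₂ ∧ u ∈ h₃ ∧ w ∈ h₃ := by
  classical
  set Fuv := H.filter (fun h => u ∈ h ∧ v ∈ h) with hFuv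
  set Fvw := H.filter (fun h => v ∈ h ∧ w ∈ h) with hFvw
  set Fuw := H.filter (fun h => u ∈ h ∧ w ∈ h) with hFuw
  have memuv : ∀ {h : Finset V}, h ∈ Fuv → h ∈ H ∧ u ∈ h ∧ v ∈ h := by
    intro h hh; simpa [hFuv, Finset.mem_filter, and_assoc] using hh
  have memvw : ∀ {h : Finset V}, h ∈ Fvw → h ∈ H ∧ v ∈ h ∧ w ∈ h := by
    intro h hh; simpa [hFvw, Finset.mem_filter, and_assoc] using hh
  have memuw : ∀ {h : Finset V}, h ∈ Fuw → h ∈ H ∧ u ∈ h ∧ w ∈ h := by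
    intro h hh; simpa [hFuw, Finset.mem_filter, and_assoc] using hh
  -- an edge containing all of u, v, w equals {u,v,w}
  have trip : ∀ {h : Finset V}, h ∈ H → u ∈ h → v ∈ h → w ∈ h →
      h = ({u, v, w} : Finset V) := fun hh hu hv hw =>
    triple_eq' (huniform _ hh) huv hvw huw hu hv hw
  obtain ⟨huv1, hvw1, huw1⟩ := hpos
  rcases hcase with ⟨h2uv, h2vw, h2uw, h3⟩ | ⟨hl, h2vw, h2uw⟩ | ⟨hl, h2uv, h2uw⟩
    | ⟨hl, h2uv, h2vw⟩
  · rcases h3 with h3uv | h3vw | h3uw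
    · obtain ⟨h₂, hh₂⟩ := Finset.card_pos.mp (by omega : 0 < Fvw.card)
      obtain ⟨h₃, hh₃, hne32⟩ := pick_two' (by omega : 2 ≤ Fuw.card) h₂
      obtain ⟨h₁, hh₁, hne12, hne13⟩ := pick_three' (by omega : 3 ≤ Fuv.card) h₂ h₃
      obtain ⟨hH1, hu1, hv1⟩ := memuv hh₁
      obtain ⟨hH2, hv2, hw2⟩ := memvw hh₂
      obtain ⟨hH3, hu3, hw3⟩ := memuw hh₃
      exact ⟨h₁, h₂, h₃, hH1, hH2, hH3, hne12, fun e => hne32 e.symm, hne13,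
        hu1, hv1, hv2, hw2, hu3, hw3⟩
    · obtain ⟨h₁, hh₁⟩ := Finset.card_pos.mp (by omega : 0 < Fuv.card)
      obtain ⟨h₃, hh₃, hne31⟩ := pick_two' (by omega : 2 ≤ Fuw.card) h₁
      obtain ⟨h₂, hh₂, hne21, hne23⟩ := pick_three' (by omega : 3 ≤ Fvw.card) h₁ h₃
      obtain ⟨hH1, hu1, hv1⟩ := memuv hh₁
      obtain ⟨hH2, hv2, hw2⟩ := memvw hh₂
      obtain ⟨hH3, hu3, hw3⟩ := memuw hh₃
      exact ⟨h₁, h₂, h₃, hH1, hH2, hH3, fun e => hne21 e.symm, hne23,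
        fun e => hne31 e.symm, hu1, hv1, hv2, hw2, hu3, hw3⟩
    · obtain ⟨h₁, hh₁⟩ := Finset.card_pos.mp (by omega : 0 < Fuv.card)
      obtain ⟨h₂, hh₂, hne21⟩ := pick_two' (by omega : 2 ≤ Fvw.card) h₁
      obtain ⟨h₃, hh₃, hne31, hne32⟩ := pick_three' (by omega : 3 ≤ Fuw.card) h₁ h₂
      obtain ⟨hH1, hu1, hv1⟩ := memuv hh₁
      obtain ⟨hH2, hv2, hw2⟩ := memvw hh₂
      obtain ⟨hH3, hu3, hw3⟩ := memuw hh₃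
      exact ⟨h₁, h₂, h₃, hH1, hH2, hH3, fun e => hne21 e.symm,
        fun e => hne32 e.symm, fun e => hne31 e.symm, hu1, hv1, hv2, hw2, hu3, hw3⟩
  · -- uv light
    obtain ⟨h₁, hh₁⟩ := Finset.card_pos.mp (by omega : 0 < Fuv.card)
    obtain ⟨h₂, hh₂, hne21⟩ := pick_two' (by omega : 2 ≤ Fvw.card) h₁
    obtain ⟨hH1, hu1, hv1⟩ := memuv hh₁
    obtain ⟨hH2, hv2, hw2⟩ := memvw hh₂
    have ha : h₁ ∈ Fuw → h₁ = ({u, v, w} : Finset V) := fun hm =>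
      trip hH1 hu1 hv1 (memuw hm).2.2
    have hb : h₂ ∈ Fuw → h₂ = ({u, v, w} : Finset V) := fun hm =>
      trip hH2 (memuw hm).2.1 hv2 hw2
    obtain ⟨h₃, hh₃, hne31, hne32⟩ :=
      pick_avoid' (by omega : 2 ≤ Fuw.card) (fun e => hne21 e.symm) ha hb
    obtain ⟨hH3, hu3, hw3⟩ := memuw hh₃
    exact ⟨h₁, h₂, h₃, hH1, hH2, hH3, fun e => hne21 e.symm,
      fun e => hne32 e.symm, fun e => hne31 e.symm, hu1, hv1, hv2, hw2, hu3, hw3⟩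
  · -- vw light
    obtain ⟨h₂, hh₂⟩ := Finset.card_pos.mp (by omega : 0 < Fvw.card)
    obtain ⟨h₁, hh₁, hne12⟩ := pick_two' (by omega : 2 ≤ Fuv.card) h₂
    obtain ⟨hH1, hu1, hv1⟩ := memuv hh₁
    obtain ⟨hH2, hv2, hw2⟩ := memvw hh₂
    have ha : h₁ ∈ Fuw → h₁ = ({u, v, w} : Finset V) := fun hm =>
      trip hH1 hu1 hv1 (memuw hm).2.2
    have hb : h₂ ∈ Fuw → h₂ = ({u, v, w} : Finset V) := fun hm =>
      trip hH2 (memuw hm).2.1 hv2 hw2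
    obtain ⟨h₃, hh₃, hne31, hne32⟩ :=
      pick_avoid' (by omega : 2 ≤ Fuw.card) hne12 ha hb
    obtain ⟨hH3, hu3, hw3⟩ := memuw hh₃
    exact ⟨h₁, h₂, h₃, hH1, hH2, hH3, hne12,
      fun e => hne32 e.symm, fun e => hne31 e.symm, hu1, hv1, hv2, hw2, hu3, hw3⟩
  · -- uw light
    obtain ⟨h₃, hh₃⟩ := Finset.card_pos.mp (by omega : 0 < Fuw.card)
    obtain ⟨h₁, hh₁, hne13⟩ := pick_two' (by omega : 2 ≤ Fuv.card) h₃
    obtain ⟨hH1, hu1, hv1⟩ := memuv hh₁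
    obtain ⟨hH3, hu3, hw3⟩ := memuw hh₃
    have ha : h₁ ∈ Fvw → h₁ = ({u, v, w} : Finset V) := fun hm =>
      trip hH1 hu1 hv1 (memvw hm).2.2
    have hb : h₃ ∈ Fvw → h₃ = ({u, v, w} : Finset V) := fun hm =>
      trip hH3 hu3 (memvw hm).2.1 hw3
    obtain ⟨h₂, hh₂, hne21, hne23⟩ :=
      pick_avoid' (by omega : 2 ≤ Fvw.card) hne13 ha hb
    obtain ⟨hH2, hv2, hw2⟩ := memvw hh₂
    exact ⟨h₁, h₂, h₃, hH1, hH2, hH3, fun e => hne21 e.symm, hne23, hne13,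
      hu1, hv1, hv2, hw2, hu3, hw3⟩
end
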